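/- arXiv:2301.12350 — 12 statements merged into one kernel-verified Lean document; each statement's English description precedes it below -/
import Mathlib

section
/- Let l ≥ 0, d ≥ 1, and let ε = p_0…p_{l−1}(e_0…e_{d−1})^∞ be an ultimately periodic sequence over an alphabet A whose letters p_0,…,p_{l−1}, e_0,…,e_{d−1} are pairwise distinct. For 0 ≤ j < d set P_j := { m ∈ ℕ : s_m = e_j }, where s_m = ε_{ν₂(m+1)}. Then P_0 = { 2m+1 : m ∈ P_{d−1} } ∪ { (2k+1)·2^l − 1 : k ∈ ℕ }. -/
/-- For `ε = p₀…p_{l−1}(e₀…e_{d−1})^∞` with pairwise distinct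
letters and `s_m = ε_{ν₂(m+1)}`, the position sets `P_j = {m : s_m = e_j}`
satisfy `P₀ = {2m+1 : m ∈ P_{d−1}} ∪ {(2k+1)·2^l − 1 : k ∈ ℕ}`. -/
theorem stmt4 (A : Type) (l d : ℕ) (hd : 1 ≤ d)
    (p : Fin l → A) (e : Fin d → A)
    (hp : Function.Injective p) (he : Function.Injective e)
    (hpe : ∀ (i : Fin l) (j : Fin d), p i ≠ e j)
    (ε : ℕ → A)
    (hεp : ∀ n (h : n < l), ε n = p ⟨n, h⟩)
    (hεe : ∀ j (hj : j < d), ∀ k : ℕ, ε (l + j + k * d) = e ⟨j, hj⟩) :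
    {m : ℕ | ε (padicValNat 2 (m + 1)) = e ⟨0, hd⟩} =
      ((fun m => 2 * m + 1) ''
          {m : ℕ | ε (padicValNat 2 (m + 1)) = e ⟨d - 1, Nat.sub_lt hd Nat.one_pos⟩}) ∪
        {m : ℕ | ∃ k : ℕ, m = (2 * k + 1) * 2 ^ l - 1} := by
  have hdpos : 0 < d := hd
  have key : ∀ n (j : ℕ) (hj : j < d), ε n = e ⟨j, hj⟩ ↔ (l ≤ n ∧ (n - l) % d = j) := by
    intro n j hj
    constructor
    · intro h
      rcases lt_or_ge n l with hn | hn
      · exact absurd (hεp n hn ▸ h) (hpe _ _)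
      · refine ⟨hn, ?_⟩
        have hr : (n - l) % d < d := Nat.mod_lt _ hdpos
        have hdm : d * ((n - l) / d) + (n - l) % d = n - l := Nat.div_add_mod _ _
        have hcomm : (n - l) / d * d = d * ((n - l) / d) := Nat.mul_comm _ _
        have hrepr : l + (n - l) % d + (n - l) / d * d = n := by omega
        have h2 : ε (l + (n - l) % d + (n - l) / d * d) = e ⟨(n - l) % d, hr⟩ :=
          hεe _ hr _
        rw [hrepr] at h2
        have := he (h2.symm.trans h)
        exact (Fin.mk.injEq _ _ _ _).mp this
    · rintro ⟨hn, hmod⟩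
      have hdm : d * ((n - l) / d) + (n - l) % d = n - l := Nat.div_add_mod _ _
      have hcomm : (n - l) / d * d = d * ((n - l) / d) := Nat.mul_comm _ _
      have hrepr : l + j + (n - l) / d * d = n := by omega
      have h2 := hεe j hj ((n - l) / d)
      rw [hrepr] at h2
      exact h2
  ext m
  simp only [Set.mem_setOf_eq, Set.mem_union, Set.mem_image]
  rw [key _ 0 hdpos]
  constructor
  · rintro ⟨hl, hmod⟩
    set ν := padicValNat 2 (m + 1) with hν
    rcases eq_or_lt_of_le hl with heq | hlt
    · right
      have hdvd : 2 ^ l ∣ m + 1 := heq ▸ pow_padicValNat_dvd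
      obtain ⟨t, ht⟩ := hdvd
      have hndvd : ¬ 2 ^ (l + 1) ∣ m + 1 := by
        rw [heq]
        exact pow_succ_padicValNat_not_dvd (Nat.succ_ne_zero m)
      have hodd : t % 2 = 1 := by
        rcases Nat.mod_two_eq_zero_or_one t with h0 | h1
        · exfalso
          apply hndvd
          refine ⟨t / 2, ?_⟩
          calc m + 1 = 2 ^ l * (2 * (t / 2)) := by rw [ht]; congr 1; omega
            _ = 2 ^ (l + 1) * (t / 2) := by ring
        · exact h1
      refine ⟨t / 2, ?_⟩
      have h2 : m + 1 = (2 * (t / 2) + 1) * 2 ^ l := by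
        rw [ht, mul_comm]; congr 1; omega
      omega
    · left
      have hν1 : 1 ≤ ν := by omega
      have h2dvd : 2 ∣ m + 1 := by
        have h := (pow_dvd_pow 2 hν1).trans (pow_padicValNat_dvd (p := 2) (n := m + 1))
        simpa using h
      obtain ⟨t, ht⟩ := h2dvd
      have htpos : 1 ≤ t := by omega
      refine ⟨t - 1, ?_, by omega⟩
      rw [key _ (d - 1) (Nat.sub_lt hd Nat.one_pos)]
      have h3 : ν = 1 + padicValNat 2 t := by
        rw [hν, ht, padicValNat.mul two_ne_zero (by omega),
          padicValNat.self one_lt_two]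
      have hval : padicValNat 2 (t - 1 + 1) = ν - 1 := by
        rw [Nat.sub_add_cancel htpos]; omega
      rw [hval]
      obtain ⟨q, hq⟩ := Nat.dvd_of_mod_eq_zero hmod
      have hqpos : 1 ≤ q := by
        rcases Nat.eq_zero_or_pos q with rfl | h1
        · exfalso; rw [mul_zero] at hq; omega
        · exact h1
      have hq' : d * (q - 1) + d = d * q := by
        rw [← Nat.mul_succ]; congr 1; omega
      refine ⟨by omega, ?_⟩
      have hrepr : ν - 1 - l = d * (q - 1) + (d - 1) := by omega
      rw [hrepr, Nat.mul_add_mod, Nat.mod_eq_of_lt (by omega)]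
  · rintro (⟨m', hm', rfl⟩ | ⟨k, hk⟩)
    · rw [key _ (d - 1) (Nat.sub_lt hd Nat.one_pos)] at hm'
      obtain ⟨hl', hmod'⟩ := hm'
      set ν' := padicValNat 2 (m' + 1) with hν'
      have hval : padicValNat 2 (2 * m' + 1 + 1) = 1 + ν' := by
        have h4 : 2 * m' + 1 + 1 = 2 * (m' + 1) := by ring
        rw [h4, padicValNat.mul two_ne_zero (by omega),
          padicValNat.self one_lt_two, hν']
      rw [hval]
      refine ⟨by omega, ?_⟩
      have hdm : d * ((ν' - l) / d) + (ν' - l) % d = ν' - l := Nat.div_add_mod _ _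
      have hrepr : 1 + ν' - l = d * ((ν' - l) / d) + d := by omega
      rw [hrepr, Nat.mul_add_mod, Nat.mod_self]
    · subst hk
      have h1 : 1 ≤ 2 ^ l := Nat.one_le_two_pow
      have hm1 : (2 * k + 1) * 2 ^ l - 1 + 1 = (2 * k + 1) * 2 ^ l := by
        have : 1 ≤ (2 * k + 1) * 2 ^ l := Nat.one_le_iff_ne_zero.mpr (by positivity)
        omega
      rw [hm1, padicValNat.mul (by omega) (by positivity), padicValNat.prime_pow,
        padicValNat.eq_zero_of_not_dvd (by omega)]
      simp
end

section
/- Let R be a commutative ring of characteristic 2, let ε : ℕ → R be any sequence, and set s_m = ε_{ν₂(m+1)} for m ≥ 0. Define the continuant sequences P_{−1} = 1, Q_{−1} = 0, P_0 = s_0, Q_0 = 1, and P_k = s_k P_{k−1} + P_{k−2}, Q_k = s_k Q_{k−1} + Q_{k−2} for k ≥ 1, and set u_n := P_{2^n−2}, v_n := Q_{2^n−2} for n ≥ 0 (so u_0 = 1, v_0 = 0). Then for all n ≥ 0: u_{n+1} = ε_n · u_n² and v_{n+1} = ε_n · u_n · v_n + 1. -/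
namespace Stmt5Aux

/-- 2-adic valuation of `2^v * c` with `c` odd is `v`. -/
lemma val2_mul_odd (v c : ℕ) (hc : c % 2 = 1) :
    padicValNat 2 (2 ^ v * c) = v := by
  have hc0 : c ≠ 0 := by omega
  have h2 : ¬ (2 ∣ c) := by omega
  rw [padicValNat.mul (by positivity) hc0, padicValNat.prime_pow,
    padicValNat.eq_zero_of_not_dvd h2]
  omega

lemma exists_decomp (m : ℕ) (hm : 1 ≤ m) :
    ∃ v c, c % 2 = 1 ∧ m = 2 ^ v * c ∧ padicValNat 2 m = v := by
  have hm0 : m ≠ 0 := by omega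
  have hfac : m.factorization 2 = padicValNat 2 m :=
    Nat.factorization_def m Nat.prime_two
  have hdvd := Nat.ordProj_mul_ordCompl_eq_self m 2
  have hnd := Nat.not_dvd_ordCompl Nat.prime_two hm0
  rw [hfac] at hdvd hnd
  exact ⟨padicValNat 2 m, m / 2 ^ padicValNat 2 m, by omega, hdvd.symm, rfl⟩

lemma pow_two_mod_two (k : ℕ) (hk : 1 ≤ k) : 2 ^ k % 2 = 0 := by
  have h : k = (k - 1) + 1 := by omega
  rw [h, pow_succ]
  exact Nat.mul_mod_left _ 2

lemma val2_period (n m : ℕ) (h1 : 1 ≤ m) (h2 : m < 2 ^ n) :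
    padicValNat 2 (2 ^ n + m) = padicValNat 2 m := by
  obtain ⟨v, c, hc, hmc, hv⟩ := exists_decomp m h1
  have hvn : v < n := by
    have h2v : 2 ^ v ≤ m := by
      rw [hmc]; exact Nat.le_mul_of_pos_right _ (by omega)
    exact (Nat.pow_lt_pow_iff_right (by omega)).mp (lt_of_le_of_lt h2v h2)
  have key : 2 ^ n + m = 2 ^ v * (2 ^ (n - v) + c) := by
    rw [hmc, Nat.mul_add, ← Nat.pow_add]
    congr 2
    omega
  have he := pow_two_mod_two (n - v) (by omega)
  have hodd : (2 ^ (n - v) + c) % 2 = 1 := by omega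
  rw [key, val2_mul_odd v _ hodd, hv]

lemma val2_refl (n m : ℕ) (h1 : 1 ≤ m) (h2 : m < 2 ^ n) :
    padicValNat 2 (2 ^ n - m) = padicValNat 2 m := by
  obtain ⟨v, c, hc, hmc, hv⟩ := exists_decomp m h1
  have hvn : v < n := by
    have h2v : 2 ^ v ≤ m := by
      rw [hmc]; exact Nat.le_mul_of_pos_right _ (by omega)
    exact (Nat.pow_lt_pow_iff_right (by omega)).mp (lt_of_le_of_lt h2v h2)
  have hcb : c < 2 ^ (n - v) := by
    by_contra hcb
    push_neg at hcb
    have h3 : 2 ^ v * 2 ^ (n - v) ≤ 2 ^ v * c := Nat.mul_le_mul_left _ hcb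
    rw [← Nat.pow_add] at h3
    have hnv : v + (n - v) = n := by omega
    rw [hnv] at h3
    omega
  have key : 2 ^ n - m = 2 ^ v * (2 ^ (n - v) - c) := by
    rw [hmc, Nat.mul_sub, ← Nat.pow_add]
    congr 2
    omega
  have he := pow_two_mod_two (n - v) (by omega)
  have hodd : (2 ^ (n - v) - c) % 2 = 1 := by omega
  rw [key, val2_mul_odd v _ hodd, hv]

open Matrix

variable {R : Type} [CommRing R]

def Mk (a : R) : Matrix (Fin 2) (Fin 2) R := !![a, 1; 1, 0]

def Fm (s : ℕ → R) : ℕ → Matrix (Fin 2) (Fin 2) R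
  | 0 => 1
  | k + 1 => Fm s k * Mk (s k)

lemma Fm_congr {s t : ℕ → R} : ∀ k, (∀ m, m < k → s m = t m) → Fm s k = Fm t k
  | 0, _ => rfl
  | k + 1, h => by
      rw [Fm, Fm, Fm_congr k (fun m hm => h m (by omega)), h k (by omega)]

lemma Fm_add (s : ℕ → R) (a : ℕ) :
    ∀ b, Fm s (a + b) = Fm s a * Fm (fun m => s (a + m)) b
  | 0 => by simp [Fm]
  | b + 1 => by
      rw [← Nat.add_assoc, Fm, Fm_add s a b, Fm, mul_assoc]

lemma Fm_one (s : ℕ → R) : Fm s 1 = Mk (s 0) := by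
  simp [Fm]

lemma Fm_succ_left (s : ℕ → R) (k : ℕ) :
    Fm s (k + 1) = Mk (s 0) * Fm (fun m => s (m + 1)) k := by
  have h := Fm_add s 1 k
  rw [Nat.add_comm 1 k] at h
  rw [h, Fm_one]
  congr 1
  exact Fm_congr k (fun m _ => by rw [Nat.add_comm])

lemma transpose_fin_two (a b c d : R) :
    (!![a, b; c, d] : Matrix (Fin 2) (Fin 2) R)ᵀ = !![a, c; b, d] := by
  ext i j
  fin_cases i <;> fin_cases j <;> simp

lemma Mk_transpose (a : R) : (Mk a)ᵀ = Mk a := by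
  rw [Mk, transpose_fin_two]

lemma Fm_transpose : ∀ (k : ℕ) (s : ℕ → R),
    (Fm s k)ᵀ = Fm (fun m => s (k - 1 - m)) k
  | 0, s => by simp [Fm]
  | k + 1, s => by
      rw [Fm_succ_left, Matrix.transpose_mul, Mk_transpose,
        Fm_transpose k (fun m => s (m + 1))]
      show Fm (fun m => s (k - 1 - m + 1)) k * Mk (s 0) = _
      rw [Fm]
      congr 1
      · exact Fm_congr k (fun m hm => by congr 1; omega)
      · have hkk : k + 1 - 1 - k = 0 := by omega
        rw [hkk]

lemma Fm_det (s : ℕ → R) : ∀ k, (Fm s k).det = (-1 : R) ^ k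
  | 0 => by simp [Fm]
  | k + 1 => by
      rw [Fm, Matrix.det_mul, Fm_det s k, Mk, Matrix.det_fin_two_of]
      ring

end Stmt5Aux

open Stmt5Aux Matrix in
/-- In a commutative ring of characteristic 2, for the continuants
`P, Q` of the continued fraction with partial quotients `s_m = ε_{ν₂(m+1)}`
(indexed here so that `P n, Q n` are the continuants `P_{n−1}, Q_{n−1}` of the
paper, i.e. `P 0 = P_{−1} = 1`, `Q 0 = Q_{−1} = 0`), the quantities
`u_n = P_{2^n−2}`, `v_n = Q_{2^n−2}` satisfy `u_{n+1} = ε_n u_n²` and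
`v_{n+1} = ε_n u_n v_n + 1`. -/
theorem stmt5 (R : Type) [CommRing R] [CharP R 2] (ε : ℕ → R)
    (s : ℕ → R) (hs : ∀ m, s m = ε (padicValNat 2 (m + 1)))
    (P Q : ℕ → R)
    (hP0 : P 0 = 1) (hQ0 : Q 0 = 0) (hP1 : P 1 = s 0) (hQ1 : Q 1 = 1)
    (hP : ∀ n, P (n + 2) = s (n + 1) * P (n + 1) + P n)
    (hQ : ∀ n, Q (n + 2) = s (n + 1) * Q (n + 1) + Q n) :
    ∀ n : ℕ, P (2 ^ (n + 1) - 1) = ε n * P (2 ^ n - 1) ^ 2 ∧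
      Q (2 ^ (n + 1) - 1) = ε n * P (2 ^ n - 1) * Q (2 ^ n - 1) + 1 := by
  have h2 : (2 : R) = 0 := by exact_mod_cast CharP.cast_eq_zero R 2
  -- entries of Fm
  have key : ∀ k, Fm s (k + 1) = !![P (k + 1), P k; Q (k + 1), Q k] := by
    intro k
    induction k with
    | zero =>
        show (1 : Matrix (Fin 2) (Fin 2) R) * Mk (s 0) = _
        rw [one_mul, Mk, hP0, hQ0, hP1, hQ1]
    | succ k ih =>
        show Fm s (k + 1) * Mk (s (k + 1)) = _
        rw [ih, Mk, Matrix.mul_fin_two]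
        have e1 : P (k + 1) * s (k + 1) + P k * 1 = P (k + 2) := by
          rw [hP k]; ring
        have e2 : P (k + 1) * 1 + P k * 0 = P (k + 1) := by ring
        have e3 : Q (k + 1) * s (k + 1) + Q k * 1 = Q (k + 2) := by
          rw [hQ k]; ring
        have e4 : Q (k + 1) * 1 + Q k * 0 = Q (k + 1) := by ring
        rw [e1, e2, e3, e4]
  intro n
  match n with
  | 0 =>
      have h1 : padicValNat 2 1 = 0 := padicValNat.one
      constructor
      · show P 1 = ε 0 * P 0 ^ 2
        rw [hP1, hs 0, hP0]
        norm_num [h1]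
      · show Q 1 = ε 0 * P 0 * Q 0 + 1
        rw [hQ1, hP0, hQ0]
        ring
  | n + 1 =>
      set N := n + 1 with hN
      have hpow : 2 ≤ 2 ^ N := by
        calc 2 = 2 ^ 1 := by norm_num
        _ ≤ 2 ^ N := Nat.pow_le_pow_right (by norm_num) (by omega)
      -- folding identity
      have hsN : s (2 ^ N - 1) = ε N := by
        rw [hs]
        have : 2 ^ N - 1 + 1 = 2 ^ N := by omega
        rw [this, padicValNat.prime_pow]
      have hshift : ∀ m, m < 2 ^ N - 1 → s (2 ^ N - 1 + (1 + m)) = s m := by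
        intro m hm
        have harg : 2 ^ N - 1 + (1 + m) = 2 ^ N + m := by omega
        rw [harg, hs, hs]
        have harg2 : 2 ^ N + m + 1 = 2 ^ N + (m + 1) := by omega
        rw [harg2, val2_period N (m + 1) (by omega) (by omega)]
      have hfold : Fm s (2 ^ (N + 1) - 1)
          = Fm s (2 ^ N - 1) * (Mk (ε N) * Fm s (2 ^ N - 1)) := by
        have hsplit : 2 ^ (N + 1) - 1 = (2 ^ N - 1) + (1 + (2 ^ N - 1)) := by
          have : 2 ^ (N + 1) = 2 * 2 ^ N := by rw [pow_succ]; ring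
          omega
        rw [hsplit, Fm_add]
        congr 1
        have hco : 1 + (2 ^ N - 1) = (2 ^ N - 1) + 1 := by omega
        rw [hco, Fm_succ_left]
        have hfirst : s (2 ^ N - 1 + 0) = ε N := by
          rw [Nat.add_zero, hsN]
        rw [hfirst]
        congr 1
        refine Fm_congr _ (fun m hm => ?_)
        have : m + 1 = 1 + m := by omega
        rw [this]
        exact hshift m hm
      -- palindrome symmetry
      have hsym : (Fm s (2 ^ N - 1))ᵀ = Fm s (2 ^ N - 1) := by
        rw [Fm_transpose]
        refine Fm_congr _ (fun m hm => ?_)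
        rw [hs, hs]
        have harg : 2 ^ N - 1 - 1 - m + 1 = 2 ^ N - (m + 1) := by omega
        rw [harg, val2_refl N (m + 1) (by omega) (by omega)]
      -- entries
      have hk1 : 2 ^ N - 1 = (2 ^ N - 2) + 1 := by omega
      have hk2 : 2 ^ (N + 1) - 1 = (2 ^ (N + 1) - 2) + 1 := by
        have : 2 ^ (N + 1) = 2 * 2 ^ N := by rw [pow_succ]; ring
        omega
      set u := P (2 ^ N - 1) with hu
      set v := Q (2 ^ N - 1) with hv
      set p := P (2 ^ N - 2) with hp'
      set q := Q (2 ^ N - 2) with hq'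
      have hA : Fm s (2 ^ N - 1) = !![u, p; v, q] := by
        rw [hk1, key, ← hk1]
      have hB : Fm s (2 ^ (N + 1) - 1)
          = !![P (2 ^ (N + 1) - 1), P (2 ^ (N + 1) - 2);
               Q (2 ^ (N + 1) - 1), Q (2 ^ (N + 1) - 2)] := by
        rw [hk2, key, ← hk2]
      -- symmetry: p = v
      have hpv : p = v := by
        rw [hA, transpose_fin_two] at hsym
        have := congrFun (congrFun hsym 1) 0
        simpa using this
      -- determinant
      have hdet : u * q - p * v = (-1 : R) ^ (2 ^ N - 1) := by
        have := Fm_det s (2 ^ N - 1)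
        rw [hA, Matrix.det_fin_two_of] at this
        exact this
      have hm1 : (-1 : R) = 1 := by linear_combination -h2
      have hdet1 : u * q - p * v = 1 := by rw [hdet, hm1, one_pow]
      -- put it together
      have hmain := hB.symm.trans hfold
      rw [hA, Mk, Matrix.mul_fin_two, Matrix.mul_fin_two] at hmain
      have h00 : P (2 ^ (N + 1) - 1)
          = u * (ε N * u + 1 * v) + p * (1 * u + 0 * v) := by
        have := congrFun (congrFun hmain 0) 0
        simpa using this
      have h10 : Q (2 ^ (N + 1) - 1)
          = v * (ε N * u + 1 * v) + q * (1 * u + 0 * v) := by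
        have := congrFun (congrFun hmain 1) 0
        simpa using this
      constructor
      · linear_combination h00 + u * hpv + u * v * h2
      · linear_combination h10 + hdet1 + v * hpv + v * v * h2
end

section
/- Let l ≥ 0 and d ≥ 1, and let F₀ ∈ F₂[[z]] be the power series whose coefficient at z^m is 1 if and only if ν₂(m+1) ≥ l and ν₂(m+1) ≡ l (mod d). Then (1 + z^{2^l}) · ( F₀ + Σ_{n=1}^{d−1} z^{2^n − 1} F₀^{2^n} ) = z^{2^l − 1} in F₂[[z]]. -/
/-!
Over `𝔽_p` the Frobenius `φ ↦ φ ^ p ^ n` is the substitution `z ↦ z ^ p ^ n`, so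
`z ^ (p ^ n - 1) * F₀ ^ p ^ n` has coefficient `1` at `z ^ m` exactly when `p ^ n ∣ m + 1` and
`ν(m + 1) - n` lies in the index set of `F₀`. For each `m` with `ν(m + 1) ≥ l` exactly one
`n < d` qualifies, namely the residue of `ν(m + 1) - l` mod `d`, and none does otherwise. Hence the
second factor is `∑_{2^l ∣ m+1} z ^ m = z ^ (2 ^ l - 1) / (1 - z ^ 2 ^ l)`, and `1 - z ^ 2 ^ l`
equals `1 + z ^ 2 ^ l` in characteristic `2`.
-/

open PowerSeries Finset

theorem Nat.le_sub_and_sub_mod_eq_iff {v l d n : ℕ} (hn : n < d) :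
    (n ≤ v ∧ l ≤ v - n ∧ (v - n) % d = l % d) ↔ (l ≤ v ∧ n = (v - l) % d) := by
  constructor
  · rintro ⟨hnv, hlv, hmod⟩
    obtain ⟨c, hc⟩ := (Nat.modEq_iff_dvd' hlv).mp hmod.symm
    refine ⟨by omega, ?_⟩
    rw [show v - l = n + d * c by omega, Nat.add_mul_mod_self_left, Nat.mod_eq_of_lt hn]
  · rintro ⟨hlv, rfl⟩
    have h := Nat.mod_add_div (v - l) d
    refine ⟨by omega, by omega, ?_⟩
    rw [show v - (v - l) % d = l + d * ((v - l) / d) by omega, Nat.add_mul_mod_self_left]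

namespace PowerSeries

variable {R : Type*} [CommRing R]

theorem X_pow_sub_one_mul_expand_mk_succ (q : ℕ) (hq : q ≠ 0) (s : ℕ → R) :
    X ^ (q - 1) * expand q hq (mk fun m => s (m + 1)) =
      mk fun m => if q ∣ m + 1 then s ((m + 1) / q) else 0 := by
  ext m
  rw [coeff_X_pow_mul', coeff_mk]
  by_cases hle : q - 1 ≤ m
  · obtain ⟨k, rfl⟩ : ∃ k, m = k + (q - 1) := ⟨m - (q - 1), by omega⟩
    simp only [if_pos hle, Nat.add_sub_cancel, coeff_expand, show k + (q - 1) + 1 = k + q by omega,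
      Nat.dvd_add_self_right]
    split_ifs
    · rw [Nat.add_div_right _ (Nat.pos_of_ne_zero hq), coeff_mk]
    · rfl
  · rw [if_neg hle, if_neg (Nat.not_dvd_of_pos_of_lt m.succ_pos (by omega))]

theorem one_sub_X_pow_mul_mk_dvd_succ (q : ℕ) (hq : q ≠ 0) :
    (1 - X ^ q) * (mk fun m => if q ∣ m + 1 then (1 : R) else 0) = X ^ (q - 1) := by
  have h := congrArg (expand q hq) (mk_one_mul_one_sub_eq_one (S := R))
  rw [map_mul, map_sub, map_one, expand_X] at h
  rw [← X_pow_sub_one_mul_expand_mk_succ q hq (fun _ => 1), mul_left_comm, mul_comm (1 - _)]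
  exact (congrArg (X ^ (q - 1) * ·) h).trans (mul_one _)

theorem pow_prime_pow_eq_expand {p : ℕ} [hp : Fact p.Prime] (φ : (ZMod p)⟦X⟧) (n : ℕ) :
    φ ^ p ^ n = expand (p ^ n) (pow_ne_zero n hp.out.ne_zero) φ := by
  rw [← MvPowerSeries.map_iterateFrobenius_expand p hp.out.ne_zero φ n]
  have hfrob : iterateFrobenius (ZMod p) p n = RingHom.id _ := by
    ext x; exact ZMod.pow_card_pow x
  rw [hfrob, MvPowerSeries.map_id]
  rfl

theorem sum_X_pow_sub_one_mul_expand_mk_padicValNat {p : ℕ} [hp : Fact p.Prime] (l d : ℕ)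
    (hd : 0 < d) :
    ∑ n ∈ range d, X ^ (p ^ n - 1) * expand (p ^ n) (pow_ne_zero n hp.out.ne_zero)
        (mk fun m => if l ≤ padicValNat p (m + 1) ∧ padicValNat p (m + 1) % d = l % d
          then (1 : R) else 0) =
      mk fun m => if p ^ l ∣ m + 1 then 1 else 0 := by
  ext m
  have hm : m + 1 ≠ 0 := m.succ_ne_zero
  set v := padicValNat p (m + 1)
  have hterm : ∀ n ∈ range d,
      (if p ^ n ∣ m + 1 then
        (if l ≤ padicValNat p ((m + 1) / p ^ n) ∧ padicValNat p ((m + 1) / p ^ n) % d = l % d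
          then (1 : R) else 0) else 0) = if l ≤ v ∧ n = (v - l) % d then 1 else 0 := by
    intro n hn
    rw [← if_congr (Nat.le_sub_and_sub_mod_eq_iff (mem_range.mp hn)) rfl rfl]
    by_cases hnv : n ≤ v
    · have hdvd := (padicValNat_dvd_iff_le hm).mpr hnv
      rw [if_pos hdvd, padicValNat.div_pow hdvd]
      exact if_congr (and_iff_right hnv).symm rfl rfl
    · rw [if_neg (mt (padicValNat_dvd_iff_le hm).mp hnv), if_neg (fun h => hnv h.1)]
  simp only [map_sum, coeff_mk, X_pow_sub_one_mul_expand_mk_succ _ _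
    (fun k => if l ≤ padicValNat p k ∧ padicValNat p k % d = l % d then (1 : R) else 0)]
  rw [sum_congr rfl hterm]
  by_cases hlv : l ≤ v
  · rw [if_pos ((padicValNat_dvd_iff_le hm).mpr hlv)]
    simp only [hlv, true_and, sum_ite_eq', mem_range, Nat.mod_lt _ hd, if_true]
  · rw [if_neg (mt (padicValNat_dvd_iff_le hm).mp hlv)]
    simp only [hlv, false_and, if_false, sum_const_zero]

end PowerSeries

/-- Let `F₀ ∈ F₂[[z]]` have coefficient 1 at `z^m` exactly when
`ν₂(m+1) ≥ l` and `ν₂(m+1) ≡ l (mod d)`.  Then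
`(1 + z^{2^l})·(F₀ + Σ_{n=1}^{d−1} z^{2^n−1} F₀^{2^n}) = z^{2^l−1}`. -/
theorem stmt7 (l d : ℕ) (hd : 1 ≤ d)
    (F₀ : PowerSeries (ZMod 2))
    (hF₀ : F₀ = PowerSeries.mk fun m =>
      if l ≤ padicValNat 2 (m + 1) ∧ padicValNat 2 (m + 1) % d = l % d
      then 1 else 0) :
    (1 + PowerSeries.X ^ 2 ^ l) *
        (F₀ + ∑ n ∈ Finset.Ico 1 d, PowerSeries.X ^ (2 ^ n - 1) * F₀ ^ 2 ^ n) =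
      PowerSeries.X ^ (2 ^ l - 1) := by
  have hsum : F₀ + ∑ n ∈ Ico 1 d, X ^ (2 ^ n - 1) * F₀ ^ 2 ^ n =
      ∑ n ∈ range d, X ^ (2 ^ n - 1) * expand (2 ^ n) (pow_ne_zero n two_ne_zero) F₀ := by
    rw [range_eq_Ico, sum_eq_sum_Ico_succ_bot hd]
    simp only [pow_prime_pow_eq_expand, pow_zero, Nat.sub_self, one_mul, expand_one_apply]
  have : CharP (ZMod 2)⟦X⟧ 2 := charP_of_injective_algebraMap' (ZMod 2) 2
  rw [hsum, hF₀, sum_X_pow_sub_one_mul_expand_mk_padicValNat l d hd, ← CharTwo.sub_eq_add,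
    one_sub_X_pow_mul_mk_dvd_succ _ (pow_ne_zero l two_ne_zero)]
end

section
/- Let l ≥ 0, d ≥ 1, let K be a field of characteristic 2, and let ε = p_0…p_{l−1}(e_0…e_{d−1})^∞ be an ultimately periodic sequence with values in K. Let F := Σ_{m≥0} s_m z^m ∈ K[[z]], where s_m = ε_{ν₂(m+1)}, and let F₀ ∈ K[[z]] be the power series whose coefficient at z^m is 1 if ν₂(m+1) ≥ l and ν₂(m+1) ≡ l (mod d), and 0 otherwise. Then (1 + z^{2^l}) · F = Σ_{k=0}^{2^l − 2} s_k z^k + (1 + z^{2^l}) · Σ_{n=0}^{d−1} e_n z^{2^n − 1} F₀^{2^n}. -/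
/-!
Split the coefficients of `F` according to whether `ν₂(m + 1) < l`. The first part only depends
on `m mod 2^l`, so multiplying it by `1 - z^{2^l}` leaves its first period
`Σ_{k < 2^l - 1} s_k z^k`. In characteristic 2, `F₀^{2^n}` is `F₀` with all exponents multiplied
by `2^n`, and `ν₂(2^n j) = ν₂(j) + n`; so `z^{2^n - 1} F₀^{2^n}` is the indicator series of the `m`
with `ν₂(m + 1) ≥ l` and `ν₂(m + 1) - l ≡ n (mod d)`, and the periodicity of `ε` identifies
`Σ_n e_n z^{2^n - 1} F₀^{2^n}` with the second part. Finally `1 + z^{2^l} = 1 - z^{2^l}`.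
-/

open PowerSeries

theorem PowerSeries.coeff_pow_expChar_pow {R : Type*} [CommRing R] (p : ℕ) [ExpChar R p]
    (f : R⟦X⟧) (n m : ℕ) :
    coeff m (f ^ p ^ n) = if p ^ n ∣ m then coeff (m / p ^ n) f ^ p ^ n else 0 := by
  have hp : p ≠ 0 := expChar_ne_zero R p
  have h : f ^ p ^ n = map (iterateFrobenius R p n) (expand (p ^ n) (pow_ne_zero n hp) f) :=
    (MvPowerSeries.map_iterateFrobenius_expand p hp f n).symm
  rw [h, coeff_map, coeff_expand, apply_ite (iterateFrobenius R p n), map_zero,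
    iterateFrobenius_def]

theorem PowerSeries.one_sub_X_pow_mul_eq_sum_of_periodic {R : Type*} [CommRing R] {N : ℕ}
    {f : R⟦X⟧} (hf : ∀ m, coeff (m + N) f = coeff m f) :
    (1 - X ^ N) * f = ∑ k ∈ Finset.range N, C (coeff k f) * X ^ k := by
  ext m
  simp only [sub_mul, one_mul, map_sub, coeff_X_pow_mul', map_sum, coeff_C_mul_X_pow,
    Finset.sum_ite_eq, Finset.mem_range]
  by_cases hm : m < N
  · rw [if_neg (by omega), if_pos hm, sub_zero]
  · rw [if_pos (by omega), if_neg hm, ← hf (m - N), Nat.sub_add_cancel (by omega), sub_self]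

theorem padicValNat_add_pow_of_lt {p a l : ℕ} [Fact p.Prime] (ha : a ≠ 0)
    (h : padicValNat p a < l) : padicValNat p (a + p ^ l) = padicValNat p a := by
  have hdvd : ∀ k ≤ l, p ^ k ∣ a + p ^ l ↔ p ^ k ∣ a := fun k hk =>
    Nat.dvd_add_left (pow_dvd_pow p hk)
  have hne : a + p ^ l ≠ 0 := by omega
  refine le_antisymm ?_ ((padicValNat_dvd_iff_le hne).mp ((hdvd _ h.le).mpr pow_padicValNat_dvd))
  by_contra! hlt
  have hsucc := (hdvd _ h).mp ((padicValNat_dvd_iff_le hne).mpr hlt)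
  exact Nat.not_succ_le_self _ ((padicValNat_dvd_iff_le ha).mp hsucc)

theorem X_pow_mul_mk_padicValNat_pow {R : Type*} [CommRing R] [ExpChar R 2] (c : ℕ → R)
    (n : ℕ) :
    X ^ (2 ^ n - 1) * (mk fun m => c (padicValNat 2 (m + 1))) ^ 2 ^ n =
      mk fun m => if n ≤ padicValNat 2 (m + 1) then c (padicValNat 2 (m + 1) - n) ^ 2 ^ n
        else 0 := by
  ext m
  have hpos : 0 < 2 ^ n := Nat.two_pow_pos n
  have hval : 2 ^ n ∣ m + 1 ↔ n ≤ padicValNat 2 (m + 1) := padicValNat_dvd_iff_le m.succ_ne_zero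
  rw [coeff_X_pow_mul', coeff_mk]
  by_cases hdvd : 2 ^ n ∣ m + 1
  · obtain ⟨q, hq⟩ := hdvd
    have hq0 : q ≠ 0 := by rintro rfl; omega
    have hle : 2 ^ n ≤ 2 ^ n * q := Nat.le_mul_of_pos_right _ (Nat.pos_of_ne_zero hq0)
    have hm : m - (2 ^ n - 1) = 2 ^ n * (q - 1) := by
      rw [Nat.mul_sub, mul_one]; omega
    rw [if_pos (by omega), coeff_pow_expChar_pow, if_pos ⟨q - 1, hm⟩, hm,
      Nat.mul_div_cancel_left _ hpos, coeff_mk, if_pos (hval.mp ⟨q, hq⟩), hq, Nat.sub_add_cancel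
      (Nat.one_le_iff_ne_zero.mpr hq0), padicValNat.mul (by positivity) hq0,
      padicValNat.prime_pow, Nat.add_sub_cancel_left]
  · rw [if_neg (mt hval.mpr hdvd)]
    split_ifs with hle
    · rw [coeff_pow_expChar_pow, if_neg]
      have hsplit : m + 1 = m - (2 ^ n - 1) + 2 ^ n := by omega
      exact fun h => hdvd (hsplit ▸ dvd_add h dvd_rfl)
    · rfl

theorem le_and_sub_mod_eq_iff {l d v n : ℕ} (hn : n < d) :
    (n ≤ v ∧ l ≤ v - n ∧ (v - n) % d = l % d) ↔ (l ≤ v ∧ (v - l) % d = n) := by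
  constructor
  · rintro ⟨hnv, hlv, hmod⟩
    obtain ⟨k, hk⟩ := Nat.dvd_of_mod_eq_zero (Nat.sub_mod_eq_zero_of_mod_eq hmod)
    have hvl : v - l = d * k + n := by omega
    exact ⟨by omega, by rw [hvl, Nat.mul_add_mod, Nat.mod_eq_of_lt hn]⟩
  · rintro ⟨hlv, hmod⟩
    have hvl := Nat.div_add_mod (v - l) d
    have hvn : v - n = l + d * ((v - l) / d) := by omega
    exact ⟨by omega, by omega, by rw [hvn, Nat.add_mul_mod_self_left]⟩

theorem sum_C_mul_X_pow_mul_pow_eq_mk_of_periodic {R : Type*} [CommRing R] [ExpChar R 2]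
    {l d : ℕ} (hd : 0 < d) (e : Fin d → R) (ε : ℕ → R)
    (hεe : ∀ j (hj : j < d), ∀ k : ℕ, ε (l + j + k * d) = e ⟨j, hj⟩) :
    ∑ n : Fin d, C (e n) * X ^ (2 ^ (n : ℕ) - 1) *
        (mk fun m => if l ≤ padicValNat 2 (m + 1) ∧ padicValNat 2 (m + 1) % d = l % d
          then (1 : R) else 0) ^ 2 ^ (n : ℕ) =
      mk fun m => if l ≤ padicValNat 2 (m + 1) then ε (padicValNat 2 (m + 1)) else 0 := by
  ext m
  set v := padicValNat 2 (m + 1)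
  have hterm : ∀ n : Fin d, coeff m (C (e n) * X ^ (2 ^ (n : ℕ) - 1) *
      (mk fun m => if l ≤ padicValNat 2 (m + 1) ∧ padicValNat 2 (m + 1) % d = l % d
        then (1 : R) else 0) ^ 2 ^ (n : ℕ)) =
      if l ≤ v then (if (⟨(v - l) % d, Nat.mod_lt _ hd⟩ : Fin d) = n then e n else 0)
      else 0 := by
    intro n
    rw [mul_assoc, coeff_C_mul, X_pow_mul_mk_padicValNat_pow
      (fun v => if l ≤ v ∧ v % d = l % d then (1 : R) else 0), coeff_mk]
    simp only [ite_pow, one_pow, ne_eq, pow_eq_zero_iff', OfNat.ofNat_ne_zero, false_and,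
      not_false_eq_true, zero_pow, ← ite_and, le_and_sub_mod_eq_iff n.isLt, mul_ite, mul_one,
      mul_zero, Fin.ext_iff]
    rfl
  rw [map_sum, Finset.sum_congr rfl fun n _ => hterm n, coeff_mk]
  split_ifs with hlv
  · rw [Fintype.sum_ite_eq, ← hεe _ _ ((v - l) / d)]
    have := Nat.div_add_mod' (v - l) d
    congr 1
    omega
  · exact Finset.sum_const_zero

theorem one_sub_X_pow_mul_mk_padicValNat_lt {R : Type*} [CommRing R] (c : ℕ → R) (l : ℕ) :
    (1 - X ^ 2 ^ l) *
        (mk fun m => if padicValNat 2 (m + 1) < l then c (padicValNat 2 (m + 1)) else 0) =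
      ∑ k ∈ Finset.range (2 ^ l - 1), C (c (padicValNat 2 (k + 1))) * X ^ k := by
  set H : R⟦X⟧ := mk fun m => if padicValNat 2 (m + 1) < l then c (padicValNat 2 (m + 1)) else 0
  have hperiodic : ∀ m, coeff (m + 2 ^ l) H = coeff m H := by
    intro m
    rw [coeff_mk, coeff_mk, add_right_comm]
    by_cases hlt : padicValNat 2 (m + 1) < l
    · rw [padicValNat_add_pow_of_lt m.succ_ne_zero hlt]
    · have hdvd : 2 ^ l ∣ m + 1 + 2 ^ l :=
        dvd_add ((padicValNat_dvd_iff_le (Nat.add_one_ne_zero m)).mpr (by omega)) dvd_rfl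
      rw [if_neg hlt, if_neg (not_lt.mpr ((padicValNat_dvd_iff_le (by omega)).mp hdvd))]
  have hlast : coeff (2 ^ l - 1) H = 0 := by
    rw [coeff_mk, Nat.sub_add_cancel Nat.one_le_two_pow, padicValNat.prime_pow,
      if_neg (lt_irrefl l)]
  have hfirst : ∀ k < 2 ^ l - 1, coeff k H = c (padicValNat 2 (k + 1)) := by
    intro k hk
    refine (coeff_mk _ _).trans (if_pos ?_)
    by_contra! hle
    have := Nat.le_of_dvd k.succ_pos ((padicValNat_dvd_iff_le (Nat.add_one_ne_zero k)).mpr hle)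
    omega
  rw [one_sub_X_pow_mul_eq_sum_of_periodic hperiodic,
    ← Nat.sub_add_cancel (Nat.one_le_two_pow (n := l)), Finset.sum_range_succ, Nat.add_sub_cancel,
    hlast, map_zero, zero_mul, add_zero]
  exact Finset.sum_congr rfl fun k hk => by rw [hfirst k (Finset.mem_range.mp hk)]

theorem stmt8_general (K : Type) [Field K] [CharP K 2] (l d : ℕ) (hd : 1 ≤ d)
    (e : Fin d → K) (ε : ℕ → K)
    (hεe : ∀ j (hj : j < d), ∀ k : ℕ, ε (l + j + k * d) = e ⟨j, hj⟩)
    (F F₀ : PowerSeries K)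
    (hF : F = PowerSeries.mk fun m => ε (padicValNat 2 (m + 1)))
    (hF₀ : F₀ = PowerSeries.mk fun m =>
      if l ≤ padicValNat 2 (m + 1) ∧ padicValNat 2 (m + 1) % d = l % d
      then (1 : K) else 0) :
    (1 + PowerSeries.X ^ 2 ^ l) * F =
      (∑ k ∈ Finset.range (2 ^ l - 1),
        PowerSeries.C (ε (padicValNat 2 (k + 1))) * PowerSeries.X ^ k) +
      (1 + PowerSeries.X ^ 2 ^ l) *
        ∑ n : Fin d,
          PowerSeries.C (e n) * PowerSeries.X ^ (2 ^ (n : ℕ) - 1) * F₀ ^ 2 ^ (n : ℕ) := by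
  have : CharP K⟦X⟧ 2 := charP_of_injective_algebraMap' K 2
  have hsplit : (mk fun m => ε (padicValNat 2 (m + 1))) =
      (mk fun m => if padicValNat 2 (m + 1) < l then ε (padicValNat 2 (m + 1)) else 0) +
        mk fun m => if l ≤ padicValNat 2 (m + 1) then ε (padicValNat 2 (m + 1)) else 0 := by
    ext m
    rw [map_add, coeff_mk, coeff_mk, coeff_mk]
    split_ifs <;> first | omega | simp
  rw [← CharTwo.sub_eq_add (1 : K⟦X⟧), hF, hF₀,
    sum_C_mul_X_pow_mul_pow_eq_mk_of_periodic hd e ε hεe, hsplit, mul_add,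
    one_sub_X_pow_mul_mk_padicValNat_lt]

/-- For an ultimately periodic sequence
`ε = p₀…p_{l−1}(e₀…e_{d−1})^∞` with values in a field `K` of characteristic 2,
with `F = Σ s_m z^m`, `s_m = ε_{ν₂(m+1)}`, and `F₀` the 0/1-series supported on
`{m : ν₂(m+1) ≥ l and ν₂(m+1) ≡ l (mod d)}`, one has
`(1+z^{2^l})·F = Σ_{k=0}^{2^l−2} s_k z^k + (1+z^{2^l})·Σ_{n=0}^{d−1} e_n z^{2^n−1} F₀^{2^n}`. -/
theorem stmt8 (K : Type) [Field K] [CharP K 2] (l d : ℕ) (hd : 1 ≤ d)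
    (p : Fin l → K) (e : Fin d → K) (ε : ℕ → K)
    (hεp : ∀ n (h : n < l), ε n = p ⟨n, h⟩)
    (hεe : ∀ j (hj : j < d), ∀ k : ℕ, ε (l + j + k * d) = e ⟨j, hj⟩)
    (F F₀ : PowerSeries K)
    (hF : F = PowerSeries.mk fun m => ε (padicValNat 2 (m + 1)))
    (hF₀ : F₀ = PowerSeries.mk fun m =>
      if l ≤ padicValNat 2 (m + 1) ∧ padicValNat 2 (m + 1) % d = l % d
      then (1 : K) else 0) :
    (1 + PowerSeries.X ^ 2 ^ l) * F =
      (∑ k ∈ Finset.range (2 ^ l - 1),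
        PowerSeries.C (ε (padicValNat 2 (k + 1))) * PowerSeries.X ^ k) +
      (1 + PowerSeries.X ^ 2 ^ l) *
        ∑ n : Fin d,
          PowerSeries.C (e n) * PowerSeries.X ^ (2 ^ (n : ℕ) - 1) * F₀ ^ 2 ^ (n : ℕ) :=
  stmt8_general K l d hd e ε hεe F F₀ hF hF₀
end

section
/- Let d ≥ 1 and let h ∈ F₂[[z]] be the power series whose coefficient at z^m is 1 if and only if m ≥ 1 and ν₂(m) ≡ 0 (mod d). Then (1 + z) · Σ_{n=0}^{d−1} h^{2^n} + z = 0 in F₂[[z]]. -/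
/-!
Over `ZMod p`, raising to the power `p ^ n` is the substitution `z ↦ z ^ p ^ n`, so the coefficient
of `z ^ m` in `h ^ p ^ n` is the coefficient of `h` at `m / p ^ n` when `p ^ n ∣ m`. For `m ≥ 1`
this is `1` exactly when `n ≤ ν_p(m)` and `ν_p(m) - n ≡ 0 (mod d)`, i.e. for the single index
`n = ν_p(m) % d` below `d`. Hence `∑_{n<d} h ^ p ^ n = z + z² + ⋯ = z / (1 - z)`, and for `p = 2`
multiplying by `1 + z = 1 - z` gives `z = -z`.
-/

open PowerSeries

namespace PowerSeries

theorem coeff_pow_eq_coeff_trunc_pow {R : Type*} [CommSemiring R] (f : R⟦X⟧) (m a : ℕ) :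
    coeff m (f ^ a) = ((trunc (m + 1) f) ^ a).coeff m := by
  have h := congrArg (Polynomial.coeff · m) (trunc_trunc_pow f (m + 1) a)
  simpa only [coeff_trunc, Nat.lt_succ_self, if_true, ← Polynomial.coe_pow,
    Polynomial.coeff_coe] using h.symm

section FiniteField

variable {K : Type*} [Field K] [Fintype K]

theorem pow_card_eq_expand (f : K⟦X⟧) :
    f ^ Fintype.card K = expand (Fintype.card K) Fintype.card_ne_zero f := by
  ext m
  have hmq : m / Fintype.card K < m + 1 := Nat.lt_succ_of_le (Nat.div_le_self m _)
  rw [coeff_pow_eq_coeff_trunc_pow, ← FiniteField.expand_card,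
    Polynomial.coeff_expand Fintype.card_pos, coeff_expand, coeff_trunc, if_pos hmq]

theorem pow_card_pow_eq_expand (n : ℕ) (f : K⟦X⟧) :
    f ^ Fintype.card K ^ n =
      expand (Fintype.card K ^ n) (pow_ne_zero n Fintype.card_ne_zero) f := by
  induction n with
  | zero => simp
  | succ n ih => simp only [pow_succ', pow_mul', ih, pow_card_eq_expand, ← expand_mul]

theorem coeff_pow_card_pow {q : ℕ} (hq : Fintype.card K = q) (n m : ℕ) (f : K⟦X⟧) :
    coeff m (f ^ q ^ n) = if q ^ n ∣ m then coeff (m / q ^ n) f else 0 := by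
  subst hq
  rw [pow_card_pow_eq_expand, coeff_expand]

end FiniteField

end PowerSeries

theorem pow_dvd_and_padicValNat_div_pow_mod_eq_zero_iff {p m n d : ℕ} [Fact p.Prime]
    (hm : m ≠ 0) (hn : n < d) :
    (p ^ n ∣ m ∧ 1 ≤ m / p ^ n ∧ padicValNat p (m / p ^ n) % d = 0) ↔
      n = padicValNat p m % d := by
  rw [padicValNat_dvd_iff_le hm]
  constructor
  · rintro ⟨hle, -, hmod⟩
    rw [padicValNat.div_pow ((padicValNat_dvd_iff_le hm).2 hle)] at hmod
    have := (Nat.modEq_iff_dvd' hle).2 (Nat.dvd_of_mod_eq_zero hmod)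
    rwa [Nat.ModEq, Nat.mod_eq_of_lt hn] at this
  · rintro rfl
    have hle := Nat.mod_le (padicValNat p m) d
    have hdvd := (padicValNat_dvd_iff_le hm).2 hle
    refine ⟨hle, Nat.div_pos (Nat.le_of_dvd (Nat.pos_of_ne_zero hm) hdvd)
      (pow_pos (Fact.out : p.Prime).pos _), ?_⟩
    rw [padicValNat.div_pow hdvd]
    exact Nat.mod_eq_zero_of_dvd ((Nat.modEq_iff_dvd' hle).1 (Nat.mod_modEq _ d))

noncomputable def padicValModIndicator (p d : ℕ) : (ZMod p)⟦X⟧ :=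
  mk fun m => if 1 ≤ m ∧ padicValNat p m % d = 0 then 1 else 0

theorem sum_padicValModIndicator_pow_prime_pow {p d : ℕ} [Fact p.Prime] (hd : 0 < d) :
    ∑ n ∈ Finset.range d, padicValModIndicator p d ^ p ^ n = X * mk 1 := by
  ext (_ | m)
  · simp [map_sum, coeff_pow_card_pow (ZMod.card p), padicValModIndicator]
  · have hterm : ∀ n ∈ Finset.range d, coeff (m + 1) (padicValModIndicator p d ^ p ^ n) =
        if n = padicValNat p (m + 1) % d then 1 else 0 := fun n hn => by
      rw [coeff_pow_card_pow (ZMod.card p), padicValModIndicator, coeff_mk, ← ite_and]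
      exact if_congr (pow_dvd_and_padicValNat_div_pow_mod_eq_zero_iff m.succ_ne_zero
        (Finset.mem_range.1 hn)) rfl rfl
    rw [map_sum, Finset.sum_congr rfl hterm, Finset.sum_ite_eq',
      if_pos (Finset.mem_range.2 (Nat.mod_lt _ hd)), coeff_succ_X_mul, coeff_mk, Pi.one_apply]

/-- Let `h ∈ F₂[[z]]` have coefficient 1 at `z^m` exactly when
`m ≥ 1` and `ν₂(m) ≡ 0 (mod d)`.  Then `(1+z)·Σ_{n=0}^{d−1} h^{2^n} + z = 0`. -/
theorem stmt9 (d : ℕ) (hd : 1 ≤ d)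
    (h : PowerSeries (ZMod 2))
    (hh : h = PowerSeries.mk fun m =>
      if 1 ≤ m ∧ padicValNat 2 m % d = 0 then 1 else 0) :
    (1 + PowerSeries.X) * ∑ n ∈ Finset.range d, h ^ 2 ^ n + PowerSeries.X = 0 := by
  have : CharP (ZMod 2)⟦X⟧ 2 := charP_of_injective_algebraMap' (ZMod 2) 2
  rw [show h = padicValModIndicator 2 d from hh, sum_padicValModIndicator_pow_prime_pow hd,
    mul_left_comm, ← CharTwo.sub_eq_add 1 X, mul_comm (1 - X), mk_one_mul_one_sub_eq_one,
    mul_one, CharTwo.add_self_eq_zero]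
end

section
/- Let d ≥ 1. The polynomial (1 + z) · Σ_{n=0}^{d−1} Y^{2^n} + z, of degree 2^{d−1} in Y, is irreducible in F₂(z)[Y], where F₂(z) is the field of rational functions over F₂. -/
/-!
Viewed in `F₂[z][Y] = F₂[Y][z]`, the polynomial equals `(S + 1) z + S` with
`S = ∑ Y^{2^n}`: it is linear in `z` with coprime coefficients, hence irreducible.
It has positive degree in `Y`, so it is primitive over `F₂[z]`, and Gauss's lemma
carries irreducibility to `F₂(z)[Y]`.
-/

open Polynomial Polynomial.Bivariate Finset

namespace Polynomial

lemma degree_sum_range_X_pow_two_pow_lt {R : Type*} [Semiring R] (k : ℕ) :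
    (∑ n ∈ range k, (X : R[X]) ^ 2 ^ n).degree < (2 ^ k : ℕ) := by
  refine (degree_sum_le _ _).trans_lt ((Finset.sup_lt_iff (WithBot.bot_lt_coe _)).2 ?_)
  intro n hn
  exact (degree_X_pow_le _).trans_lt
    (WithBot.coe_lt_coe.2 (Nat.pow_lt_pow_right one_lt_two (mem_range.1 hn)))

lemma natDegree_sum_range_succ_X_pow_two_pow {R : Type*} [Semiring R] [Nontrivial R] (k : ℕ) :
    (∑ n ∈ range (k + 1), (X : R[X]) ^ 2 ^ n).natDegree = 2 ^ k := by
  rw [sum_range_succ, natDegree_add_eq_right_of_degree_lt, natDegree_X_pow]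
  simpa only [degree_X_pow] using degree_sum_range_X_pow_two_pow_lt k

/-- A polynomial `a z + b` in `R[Y][z]`, written in `R[z][Y]`. -/
lemma irreducible_C_X_mul_map_C_add_map_C {R : Type*} [CommRing R] [IsDomain R]
    {a b : R[X]} (ha : a ≠ 0) (hab : IsRelPrime a b) :
    Irreducible (C X * a.map C + b.map C : R[X][X]) := by
  have h : swap (C X * a.map C + b.map C : R[X][X]) = C a * X + C b := by
    rw [map_add, map_mul, swap_X, swap_map_C, swap_map_C, mul_comm]
  rw [← MulEquiv.irreducible_iff (swap (R := R)).toMulEquiv]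
  exact h ▸ irreducible_C_mul_X_add_C ha hab

end Polynomial

/-- The polynomial `(1+z)·Σ_{n=0}^{d−1} Y^{2^n} + z`, of degree
`2^{d−1}` in `Y`, is irreducible in `F₂(z)[Y]`. -/
theorem stmt10 (d : ℕ) (hd : 1 ≤ d) :
    (Polynomial.C (1 + (RatFunc.X : RatFunc (ZMod 2))) *
          ∑ n ∈ Finset.range d, Polynomial.X ^ 2 ^ n +
        Polynomial.C (RatFunc.X : RatFunc (ZMod 2))).natDegree = 2 ^ (d - 1) ∧
      Irreducible
        (Polynomial.C (1 + (RatFunc.X : RatFunc (ZMod 2))) *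
            ∑ n ∈ Finset.range d, Polynomial.X ^ 2 ^ n +
          Polynomial.C (RatFunc.X : RatFunc (ZMod 2))) := by
  obtain ⟨k, rfl⟩ := Nat.exists_eq_add_of_le' hd
  set S : (ZMod 2)[X] := ∑ n ∈ range (k + 1), X ^ 2 ^ n
  set p : (ZMod 2)[X][X] := C (1 + X) * ∑ n ∈ range (k + 1), X ^ 2 ^ n + C X
  have hp_swap : p = C X * (S + 1).map C + S.map C := by
    simp only [p, S, Polynomial.map_add, Polynomial.map_sum, Polynomial.map_pow, map_X,
      Polynomial.map_one, C_add, C_1]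
    ring
  have hS_add_one : S + 1 ≠ 0 := fun h => by simpa [S, eval_finsetSum] using congrArg (eval 0) h
  have hp_irr : Irreducible p := hp_swap ▸ irreducible_C_X_mul_map_C_add_map_C hS_add_one
    (IsCoprime.isRelPrime ⟨1, -1, by ring⟩)
  have hp_deg : p.natDegree = 2 ^ k := by
    rw [natDegree_add_C, natDegree_C_mul fun h => by simpa using congrArg (eval 0) h,
      natDegree_sum_range_succ_X_pow_two_pow]
  have hp_map : p.map (algebraMap (ZMod 2)[X] (RatFunc (ZMod 2))) =
      C (1 + RatFunc.X) * ∑ n ∈ range (k + 1), X ^ 2 ^ n + C RatFunc.X := by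
    simp [p, Polynomial.map_sum, RatFunc.algebraMap_X]
  rw [← hp_map, natDegree_map_eq_of_injective (IsFractionRing.injective _ _), hp_deg,
    ← (hp_irr.isPrimitive (by rw [hp_deg]; positivity)).irreducible_iff_irreducible_map_fraction_map]
  exact ⟨rfl, hp_irr⟩
end

section
/- Let d ≥ 1. The polynomial t·Y^{2^d} + t·Y + 1 is irreducible in F₂(t)[Y], where F₂(t) is the field of rational functions over F₂. -/
open Polynomial

section ReverseIrred

variable {K : Type*} [Field K]

lemma my_reverse_reverse {p : K[X]} (h0 : p.coeff 0 ≠ 0) : p.reverse.reverse = p := by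
  have ht : p.natTrailingDegree = 0 := natTrailingDegree_eq_zero.mpr (Or.inr h0)
  have hd : p.reverse.natDegree = p.natDegree := by
    rw [reverse_natDegree, ht, Nat.sub_zero]
  ext n
  rw [coeff_reverse, coeff_reverse, hd, revAt_invol]

lemma my_isUnit_of_isUnit_reverse {q : K[X]} (h : IsUnit q.reverse) (h0 : q.coeff 0 ≠ 0) :
    IsUnit q := by
  have hq : q ≠ 0 := fun h => by simp [h] at h0
  have hdeg : q.natDegree = 0 := by
    have h1 := natDegree_eq_zero_of_isUnit h
    rw [reverse_natDegree, natTrailingDegree_eq_zero.mpr (Or.inr h0), Nat.sub_zero] at h1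
    exact h1
  obtain ⟨c, rfl⟩ := natDegree_eq_zero.mp hdeg
  exact isUnit_C.mpr (isUnit_iff_ne_zero.mpr (fun hc => hq (by rw [hc, map_zero])))

lemma my_irreducible_reverse {p : K[X]} (hp : Irreducible p) (h0 : p.coeff 0 ≠ 0) :
    Irreducible p.reverse := by
  have hpne : p ≠ 0 := hp.ne_zero
  constructor
  · intro hu
    exact hp.not_isUnit (my_isUnit_of_isUnit_reverse hu h0)
  · intro a b hab
    have h00 : a.coeff 0 * b.coeff 0 ≠ 0 := by
      rw [← mul_coeff_zero, ← hab, coeff_zero_reverse]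
      exact leadingCoeff_ne_zero.mpr hpne
    have hp' : p = a.reverse * b.reverse := by
      rw [← reverse_mul_of_domain, ← hab, my_reverse_reverse h0]
    rcases hp.isUnit_or_isUnit hp' with h | h
    · exact Or.inl (my_isUnit_of_isUnit_reverse h (left_ne_zero_of_mul h00))
    · exact Or.inr (my_isUnit_of_isUnit_reverse h (right_ne_zero_of_mul h00))

end ReverseIrred

section Main

local notation "R" => Polynomial (ZMod 2)
local notation "Kt" => RatFunc (ZMod 2)

lemma my_tail_deg (d : ℕ) :
    (C Polynomial.X * X ^ (2 ^ d - 1) + C Polynomial.X : R[X]).degree < ((2 : ℕ) ^ d : ℕ) := by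
  have hlt : 2 ^ d - 1 < 2 ^ d := Nat.sub_lt (by positivity) one_pos
  refine lt_of_le_of_lt (degree_add_le _ _) (max_lt ?_ ?_)
  · exact lt_of_le_of_lt (degree_C_mul_X_pow_le _ _) (by exact_mod_cast hlt)
  · exact lt_of_le_of_lt degree_C_le (by exact_mod_cast (by positivity : 0 < 2 ^ d))

lemma my_monic (d : ℕ) :
    ((X : R[X]) ^ 2 ^ d + C Polynomial.X * X ^ (2 ^ d - 1) + C Polynomial.X).Monic := by
  rw [add_assoc]
  exact monic_X_pow_add (my_tail_deg d)

lemma my_deg (d : ℕ) :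
    ((X : R[X]) ^ 2 ^ d + C Polynomial.X * X ^ (2 ^ d - 1) + C Polynomial.X).natDegree
      = 2 ^ d := by
  apply natDegree_eq_of_degree_eq_some
  rw [add_assoc, degree_add_eq_left_of_degree_lt, degree_X_pow]
  rw [degree_X_pow]
  exact my_tail_deg d

lemma my_eisenstein (d : ℕ) (hd : 1 ≤ d) :
    Irreducible ((X : R[X]) ^ 2 ^ d + C Polynomial.X * X ^ (2 ^ d - 1) + C Polynomial.X) := by
  set t : R := Polynomial.X
  set f : R[X] := (X : R[X]) ^ 2 ^ d + C t * X ^ (2 ^ d - 1) + C t with hf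
  have hmonic : f.Monic := my_monic d
  have hdegf : f.degree = ((2:ℕ) ^ d : ℕ) := by
    rw [degree_eq_natDegree hmonic.ne_zero, my_deg d]
  have hcoeff : ∀ n : ℕ, f.coeff n =
      (if n = 2 ^ d then 1 else 0) + t * (if n = 2 ^ d - 1 then 1 else 0) +
        (if n = 0 then t else 0) := by
    intro n
    simp only [hf, coeff_add, coeff_X_pow, coeff_C_mul, coeff_C]
  have ht_prime : Prime t := Polynomial.prime_X
  have hP : (Ideal.span {t} : Ideal R).IsPrime :=
    (Ideal.span_singleton_prime ht_prime.ne_zero).mpr ht_prime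
  refine irreducible_of_eisenstein_criterion hP ?_ ?_ ?_ ?_ hmonic.isPrimitive
  · rw [hmonic.leadingCoeff]
    intro h
    exact hP.ne_top (Ideal.eq_top_of_isUnit_mem _ h isUnit_one)
  · intro n hn
    rw [hdegf] at hn
    have hn' : n < 2 ^ d := by exact_mod_cast hn
    rw [hcoeff n, if_neg hn'.ne]
    refine Ideal.add_mem _ (Ideal.add_mem _ (Ideal.zero_mem _) ?_) ?_
    · exact Ideal.mul_mem_right _ _ (Ideal.mem_span_singleton_self t)
    · split
      · exact Ideal.mem_span_singleton_self t
      · exact Ideal.zero_mem _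
  · rw [hdegf]
    exact_mod_cast (by positivity : 0 < 2 ^ d)
  · have h2 : (2:ℕ) ≤ 2 ^ d := by
      calc (2:ℕ) = 2 ^ 1 := rfl
      _ ≤ 2 ^ d := Nat.pow_le_pow_right (by norm_num) hd
    rw [hcoeff 0, if_neg (by positivity : (0:ℕ) < 2 ^ d).ne,
      if_neg (by omega : (0:ℕ) ≠ 2 ^ d - 1), if_pos rfl, Ideal.span_singleton_pow,
      Ideal.mem_span_singleton]
    simp only [mul_zero, add_zero, zero_add]
    intro hdvd
    have := natDegree_le_of_dvd hdvd ht_prime.ne_zero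
    simp [t] at this

/-- The polynomial `t·Y^{2^d} + t·Y + 1` is irreducible in
`F₂(t)[Y]`. -/
theorem stmt11 (d : ℕ) (hd : 1 ≤ d) :
    Irreducible
      (Polynomial.C (RatFunc.X : RatFunc (ZMod 2)) * Polynomial.X ^ 2 ^ d +
        Polynomial.C (RatFunc.X : RatFunc (ZMod 2)) * Polynomial.X + 1) := by
  set T : Kt := RatFunc.X
  set φ := algebraMap R Kt
  have hφX : φ Polynomial.X = T := RatFunc.algebraMap_X
  have hT : T ≠ 0 := RatFunc.X_ne_zero
  set f : R[X] := (X : R[X]) ^ 2 ^ d + C Polynomial.X * X ^ (2 ^ d - 1) + C Polynomial.X with hf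
  have hmonic : f.Monic := my_monic d
  have hirr : Irreducible (f.map φ) :=
    (hmonic.irreducible_iff_irreducible_map_fraction_map).mp (my_eisenstein d hd)
  set F : Kt[X] := f.map φ with hF
  have hFeq : F = (X : Kt[X]) ^ 2 ^ d + C T * X ^ (2 ^ d - 1) + C T := by
    simp [hF, hf, Polynomial.map_add, Polynomial.map_mul, Polynomial.map_pow, map_C, hφX]
  have hF0 : F.coeff 0 ≠ 0 := by
    rw [hFeq]
    simp only [coeff_add, coeff_C_mul, coeff_X_pow, coeff_C, if_pos rfl]
    have h2 : (2:ℕ) ≤ 2 ^ d := by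
      calc (2:ℕ) = 2 ^ 1 := rfl
      _ ≤ 2 ^ d := Nat.pow_le_pow_right (by norm_num) hd
    rw [if_neg (by positivity : (0:ℕ) < 2 ^ d).ne, if_neg (by omega : (0:ℕ) ≠ 2 ^ d - 1)]
    simpa using hT
  have hdegF : F.natDegree = 2 ^ d := by
    rw [hF, hmonic.natDegree_map φ, my_deg d]
  have hrev : F.reverse = C T * X ^ 2 ^ d + C T * X + 1 := by
    rw [reverse, hdegF, hFeq]
    rw [reflect_add, reflect_add, reflect_monomial, reflect_C_mul_X_pow, reflect_C]
    rw [revAt_le (le_refl _), revAt_le (Nat.sub_le _ _)]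
    have h1 : 2 ^ d - (2 ^ d - 1) = 1 := by
      have : 1 ≤ 2 ^ d := Nat.one_le_two_pow
      omega
    rw [h1, Nat.sub_self, pow_zero, pow_one]
    ring
  have := my_irreducible_reverse hirr hF0
  rwa [hrev] at this

end Main
end

section
/- Let d ≥ 1 and let g ∈ F₂[[X]] be the power series whose coefficient at X^m is 1 if and only if m = 2^{kd} for some k ≥ 0. Then g is algebraic over the rational function field F₂(X), and its degree of algebraicity is exactly 2^d. -/
/-!
Over `𝔽_p`, raising a power series to the `p ^ d`-th power is `X ↦ X ^ p ^ d` on exponents, so it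
shifts `g = ∑ X ^ p ^ (k * d)` to `g - X`. Hence `g` is a root of `Y ^ p ^ d - Y + X` over
`𝔽_p[X]`. This polynomial has degree one in `X`, so it is irreducible, and by Gauss's lemma it stays
irreducible over `𝔽_p(X)`: it is the minimal polynomial of `g`.
-/

open scoped RatFunc

theorem PowerSeries.coeff_pow_char_pow {R : Type*} [CommSemiring R] (p : ℕ) [ExpChar R p]
    (n m : ℕ) (f : PowerSeries R) :
    coeff m (f ^ p ^ n) = if p ^ n ∣ m then coeff (m / p ^ n) f ^ p ^ n else 0 := by
  set T := trunc (m + 1) f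
  have htrunc : coeff m (f ^ p ^ n) = (T ^ p ^ n).coeff m := by
    rw [← coeff_coe_trunc_of_lt m.lt_succ_self, ← trunc_trunc_pow, coeff_coe_trunc_of_lt
      m.lt_succ_self, ← Polynomial.coe_pow, Polynomial.coeff_coe]
  rw [htrunc, ← Polynomial.map_iterateFrobenius_expand, Polynomial.coeff_map,
    Polynomial.coeff_expand (expChar_pow_pos R p n)]
  split_ifs
  · rw [iterateFrobenius_def, coeff_trunc, if_pos ((Nat.div_le_self m _).trans_lt m.lt_succ_self)]
  · exact map_zero _

theorem Nat.exists_eq_pow_mul_iff {p : ℕ} (hp : 0 < p) (d m : ℕ) :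
    (∃ k, m = p ^ (k * d)) ↔ m = 1 ∨ p ^ d ∣ m ∧ ∃ k, m / p ^ d = p ^ (k * d) := by
  have hpd : 0 < p ^ d := by positivity
  constructor
  · rintro ⟨_ | k, rfl⟩
    · simp
    · have hk : p ^ ((k + 1) * d) = p ^ d * p ^ (k * d) := by ring
      rw [hk, Nat.mul_div_cancel_left _ hpd]
      exact .inr ⟨dvd_mul_right _ _, k, rfl⟩
  · rintro (rfl | ⟨⟨c, rfl⟩, k, hk⟩)
    · exact ⟨0, by simp⟩
    · rw [Nat.mul_div_cancel_left _ hpd] at hk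
      exact ⟨k + 1, by rw [hk]; ring⟩

open Classical in
noncomputable def lacunarySeries (p d : ℕ) : PowerSeries (ZMod p) :=
  PowerSeries.mk fun m => if ∃ k, m = p ^ (k * d) then 1 else 0

open PowerSeries in
theorem lacunarySeries_pow_pow_eq_sub_X {p d : ℕ} [Fact p.Prime] (hd : 1 ≤ d) :
    lacunarySeries p d ^ p ^ d = lacunarySeries p d - X := by
  have hp : p.Prime := Fact.out
  have h1 : ¬ p ^ d ∣ 1 := fun h =>
    (Nat.one_lt_pow (by omega) hp.one_lt).ne' (Nat.eq_one_of_dvd_one h)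
  ext m
  have hm := Nat.exists_eq_pow_mul_iff hp.pos d m
  rw [coeff_pow_char_pow, map_sub, coeff_X, lacunarySeries, coeff_mk, coeff_mk]
  by_cases hdvd : p ^ d ∣ m
  · have hm1 : m ≠ 1 := by rintro rfl; exact h1 hdvd
    rw [if_pos hdvd, ZMod.pow_card_pow, if_neg hm1, sub_zero]
    congr 1
    exact propext (by tauto)
  · rw [if_neg hdvd]
    by_cases hm1 : m = 1
    · rw [if_pos (hm.2 (.inl hm1)), if_pos hm1, sub_self]
    · rw [if_neg (by tauto), if_neg hm1, sub_zero]

section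

open Polynomial

open Bivariate in
theorem Polynomial.irreducible_map_C_add_C_X {R : Type*} [CommRing R] [IsDomain R] (f : R[X]) :
    Irreducible (f.map C + C X : R[X][X]) := by
  have hswap : swap (f.map C + C X : R[X][X]) = X + C f := by
    rw [map_add, swap_map_C, swap_X, add_comm]
  rw [← MulEquiv.irreducible_iff swap, hswap]
  exact (monic_X_add_C f).irreducible_of_degree_eq_one (degree_X_add_C f)

theorem Polynomial.degree_X_pow_sub_X {R : Type*} [Ring R] [Nontrivial R] {n : ℕ} (hn : 1 < n) :
    (X ^ n - X : R[X]).degree = n := by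
  have hX : (X : R[X]).degree < (X ^ n : R[X]).degree := by
    rw [degree_X_pow, degree_X]
    exact_mod_cast hn
  rw [degree_sub_eq_left_of_degree_lt hX, degree_X_pow]

theorem minpoly_lacunarySeries {p d : ℕ} [Fact p.Prime] (hd : 1 ≤ d) :
    minpoly (RatFunc (ZMod p)) (lacunarySeries p d : LaurentSeries (ZMod p)) =
      (X ^ p ^ d - X + C X : (ZMod p)[X][X]).map (algebraMap _ (RatFunc (ZMod p))) := by
  have hq : 1 < p ^ d := Nat.one_lt_pow (by omega) (Fact.out : p.Prime).one_lt
  have hmonic : (X ^ p ^ d - X + C X : (ZMod p)[X][X]).Monic := by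
    refine (monic_X_pow_sub (degree_X_le.trans_lt ?_)).add_of_left (degree_C_le.trans_lt ?_)
    · exact_mod_cast hq
    · rw [degree_X_pow_sub_X hq]
      exact_mod_cast (by omega : 0 < p ^ d)
  have hirr : Irreducible (X ^ p ^ d - X + C X : (ZMod p)[X][X]) := by
    have := irreducible_map_C_add_C_X (X ^ p ^ d - X : (ZMod p)[X])
    rwa [Polynomial.map_sub, Polynomial.map_pow, map_X] at this
  have haeval : aeval (lacunarySeries p d : LaurentSeries (ZMod p))
      (X ^ p ^ d - X + C X : (ZMod p)[X][X]) = 0 := by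
    rw [map_add, map_sub, map_pow, aeval_X, aeval_C, algebraMap_hahnSeries_apply, coe_X,
      ← map_pow, ← map_sub, ← map_add, lacunarySeries_pow_pow_eq_sub_X hd, sub_sub_cancel_left,
      neg_add_cancel, map_zero]
  symm
  refine minpoly.eq_of_irreducible_of_monic ?_ ?_ (hmonic.map _)
  · exact hmonic.irreducible_iff_irreducible_map_fraction_map.mp hirr
  · rw [aeval_map_algebraMap, haeval]

theorem natDegree_minpoly_lacunarySeries {p d : ℕ} [Fact p.Prime] (hd : 1 ≤ d) :
    (minpoly (RatFunc (ZMod p)) (lacunarySeries p d : LaurentSeries (ZMod p))).natDegree =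
      p ^ d := by
  rw [minpoly_lacunarySeries hd, natDegree_map_eq_of_injective (IsFractionRing.injective _ _),
    natDegree_add_C, natDegree_eq_of_degree_eq_some
      (degree_X_pow_sub_X (Nat.one_lt_pow (by omega) (Fact.out : p.Prime).one_lt))]

end

open Classical in
/-- The power series `g = Σ_{k≥0} X^{2^{kd}} ∈ F₂[[X]]` is
algebraic over `F₂(X)` of degree exactly `2^d` (viewing `F₂[[X]]` inside the
Laurent series field, on which `F₂(X) = RatFunc (ZMod 2)` acts). -/
theorem stmt13 (d : ℕ) (hd : 1 ≤ d)
    (g : PowerSeries (ZMod 2))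
    (hg : g = PowerSeries.mk fun m =>
      if ∃ k : ℕ, m = 2 ^ (k * d) then 1 else 0) :
    ∃ P : Polynomial (RatFunc (ZMod 2)), P ≠ 0 ∧ P.natDegree = 2 ^ d ∧
      Polynomial.aeval (g : LaurentSeries (ZMod 2)) P = 0 ∧
      ∀ Q : Polynomial (RatFunc (ZMod 2)), Q ≠ 0 →
        Polynomial.aeval (g : LaurentSeries (ZMod 2)) Q = 0 → 2 ^ d ≤ Q.natDegree := by
  obtain rfl : g = lacunarySeries 2 d := hg
  have hdeg := natDegree_minpoly_lacunarySeries (p := 2) hd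
  refine ⟨_, Polynomial.ne_zero_of_natDegree_gt (n := 0) (by rw [hdeg]; positivity), hdeg,
    minpoly.aeval _ _, fun Q hQ hQg => ?_⟩
  exact hdeg ▸ Polynomial.natDegree_le_of_dvd (minpoly.dvd _ _ hQg) hQ
end

section
/- Let R be a commutative ring of characteristic 2, let a, b ∈ R, and let (u_n)_{n≥0} be a sequence taking values in the set {a, b, a+b}. Define P_{−1} = 1, Q_{−1} = 0, P_0 = u_0, Q_0 = 1, and P_n = u_n P_{n−1} + P_{n−2}, Q_n = u_n Q_{n−1} + Q_{n−2} for n ≥ 1. Then for every n ≥ −1 there exists g_n ∈ R such that a·b·(a+b)·P_n·Q_n + a·b·(P_n² + Q_n²) = a·b + g_n². -/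
/-- In a commutative ring `R` of characteristic 2, let the
partial quotients `u_n` take values in `{a, b, a+b}` and let `P, Q` be the
continuants (indexed so that `P n, Q n` are the `P_{n−1}, Q_{n−1}` of the
paper, i.e. `P 0 = P_{−1} = 1`, `Q 0 = Q_{−1} = 0`).  Then for every `n`
there is `g ∈ R` with `ab(a+b)P_nQ_n + ab(P_n² + Q_n²) = ab + g²`. -/
theorem stmt15 (R : Type) [CommRing R] [CharP R 2] (a b : R)
    (u : ℕ → R) (hu : ∀ n, u n = a ∨ u n = b ∨ u n = a + b)
    (P Q : ℕ → R)
    (hP0 : P 0 = 1) (hQ0 : Q 0 = 0) (hP1 : P 1 = u 0) (hQ1 : Q 1 = 1)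
    (hP : ∀ n, P (n + 2) = u (n + 1) * P (n + 1) + P n)
    (hQ : ∀ n, Q (n + 2) = u (n + 1) * Q (n + 1) + Q n) :
    ∀ n : ℕ, ∃ g : R,
      a * b * (a + b) * P n * Q n + a * b * (P n ^ 2 + Q n ^ 2) = a * b + g ^ 2 := by
  have h2 : (2 : R) = 0 := by exact_mod_cast CharP.cast_eq_zero R 2
  -- determinant identity
  have hdet : ∀ n, P (n + 1) * Q n + P n * Q (n + 1) = 1 := by
    intro n
    induction n with
    | zero => rw [hP0, hQ0, hP1, hQ1]; ring
    | succ m ih =>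
      rw [hP m, hQ m]
      linear_combination ih + (P (m + 1) * Q (m + 1) * u (m + 1)) * h2
  -- square lemma for partial quotients
  have hsq : ∀ n, ∃ c : R, u n ^ 2 * (a * b) + u n * (a * b * (a + b)) = c ^ 2 := by
    intro n
    rcases hu n with h | h | h
    · exact ⟨a * b, by rw [h]; linear_combination (a ^ 3 * b) * h2⟩
    · exact ⟨a * b, by rw [h]; linear_combination (a * b ^ 3) * h2⟩
    · exact ⟨0, by rw [h]; linear_combination ((a + b) ^ 2 * a * b) * h2⟩
  -- main induction, two steps at a time
  have key : ∀ n : ℕ,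
      (∃ g : R, a * b * (a + b) * P n * Q n + a * b * (P n ^ 2 + Q n ^ 2) = a * b + g ^ 2) ∧
      (∃ g : R, a * b * (a + b) * P (n + 1) * Q (n + 1)
          + a * b * (P (n + 1) ^ 2 + Q (n + 1) ^ 2) = a * b + g ^ 2) := by
    intro n
    induction n with
    | zero =>
      constructor
      · exact ⟨0, by rw [hP0, hQ0]; ring⟩
      · obtain ⟨c, hc⟩ := hsq 0
        exact ⟨c, by rw [hP1, hQ1]; linear_combination hc⟩
    | succ m ih =>
      obtain ⟨⟨g, hg⟩, ⟨h, hh⟩⟩ := ih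
      refine ⟨⟨h, hh⟩, ?_⟩
      obtain ⟨c, hc⟩ := hsq (m + 1)
      refine ⟨u (m + 1) * h + g + c, ?_⟩
      rw [hP m, hQ m]
      linear_combination (u (m + 1)) ^ 2 * hh + hg + (a * b * (a + b) * u (m + 1)) * hdet m
        + hc - (u (m + 1) * h * (g + c) + g * c) * h2
        + (a * b * u (m + 1) * (P (m + 1) * P m + Q (m + 1) * Q m)) * h2
  exact fun n => (key n).1
end

section
/- Let a, b be polynomials in F₂[t] and let (u_n)_{n≥0} be a sequence of polynomials taking values in {a, b, a+b}. Define P_{−1} = 1, Q_{−1} = 0, P_0 = u_0, Q_0 = 1, and P_n = u_n P_{n−1} + P_{n−2}, Q_n = u_n Q_{n−1} + Q_{n−2} for n ≥ 1. Then for every n ≥ −1, the formal derivative of a·b·(a+b)·P_n·Q_n + a·b·(P_n² + Q_n²) equals the formal derivative of a·b, i.e. a′·b + a·b′. -/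
open Polynomial

/-- For `a, b ∈ F₂[t]`, partial quotients `u_n ∈ {a, b, a+b}`,
and the continuants `P, Q` (indexed so that `P n, Q n` are the `P_{n−1},
Q_{n−1}` of the paper, i.e. `P 0 = P_{−1} = 1`, `Q 0 = Q_{−1} = 0`), the formal
derivative of `ab(a+b)P_nQ_n + ab(P_n² + Q_n²)` equals that of `ab`,
namely `a′b + ab′`. -/
theorem stmt16 (a b : Polynomial (ZMod 2))
    (u : ℕ → Polynomial (ZMod 2)) (hu : ∀ n, u n = a ∨ u n = b ∨ u n = a + b)
    (P Q : ℕ → Polynomial (ZMod 2))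
    (hP0 : P 0 = 1) (hQ0 : Q 0 = 0) (hP1 : P 1 = u 0) (hQ1 : Q 1 = 1)
    (hP : ∀ n, P (n + 2) = u (n + 1) * P (n + 1) + P n)
    (hQ : ∀ n, Q (n + 2) = u (n + 1) * Q (n + 1) + Q n) :
    ∀ n : ℕ,
      Polynomial.derivative
          (a * b * (a + b) * P n * Q n + a * b * (P n ^ 2 + Q n ^ 2)) =
        Polynomial.derivative a * b + a * Polynomial.derivative b := by
  have h2 : (2 : Polynomial (ZMod 2)) = 0 := CharTwo.two_eq_zero
  -- determinant identity
  have hdet : ∀ n, P (n + 1) * Q n + P n * Q (n + 1) = 1 := by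
    intro n
    induction n with
    | zero => simp [hP0, hQ0, hP1, hQ1]
    | succ m ih =>
      rw [hP m, hQ m]
      linear_combination ih + (u (m + 1) * P (m + 1) * Q (m + 1)) * h2
  -- derivative of squares vanish
  have hsq : ∀ p : Polynomial (ZMod 2), derivative (p ^ 2) = 0 := by
    intro p
    rw [derivative_pow]
    norm_num
    exact Or.inl (Or.inl (by decide))
  -- cross term derivative
  have hcross : ∀ n, derivative (a * b * (a + b) * u n)
      = (u n) ^ 2 * (derivative a * b + a * derivative b) := by
    intro n
    rcases hu n with h | h | h <;> rw [h] <;>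
      simp only [derivative_mul, derivative_add]
    · linear_combination (a ^ 2 * derivative a * b + a * b ^ 2 * derivative a
        + a ^ 2 * b * derivative b) * h2
    · linear_combination (a * derivative a * b ^ 2 + a ^ 2 * b * derivative b
        + a * b ^ 2 * derivative b) * h2
    · linear_combination ((a + b) * (derivative a + derivative b) * a * b) * h2
  intro n
  induction n using Nat.twoStepInduction with
  | zero => simp [hP0, hQ0, derivative_mul, derivative_add]
  | one =>
    rw [hP1, hQ1]
    have e : a * b * (a + b) * u 0 * 1 + a * b * ((u 0) ^ 2 + 1 ^ 2)
        = a * b * (a + b) * u 0 + (u 0) ^ 2 * (a * b) + a * b := by ring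
    rw [e]
    simp only [derivative_add, derivative_mul, hsq, hcross 0]
    linear_combination ((u 0) ^ 2 * (derivative a * b + a * derivative b)) * h2
  | more m ih1 ih2 =>
    have key : a * b * (a + b) * P (m + 2) * Q (m + 2)
          + a * b * (P (m + 2) ^ 2 + Q (m + 2) ^ 2)
        = (u (m + 1)) ^ 2 * (a * b * (a + b) * P (m + 1) * Q (m + 1)
            + a * b * (P (m + 1) ^ 2 + Q (m + 1) ^ 2))
          + (a * b * (a + b) * u (m + 1)) * (P (m + 1) * Q m + P m * Q (m + 1))
          + (a * b * (a + b) * P m * Q m + a * b * (P m ^ 2 + Q m ^ 2)) := by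
      rw [hP m, hQ m]
      linear_combination (a * b * u (m + 1) * (P (m + 1) * P m + Q (m + 1) * Q m)) * h2
    rw [key, hdet m, mul_one]
    simp only [derivative_add, derivative_mul, hsq, hcross (m + 1), ih1, ih2, zero_mul, add_zero]
    linear_combination ((u (m + 1)) ^ 2 * (derivative a * b + a * derivative b)) * h2
end

section
/- Let K = F₂(a,b) be the field of rational functions in two indeterminates a, b over F₂, and let F := Σ_{m≥0} s_m z^m ∈ K[[z]] be the power series of the period-doubling sequence, i.e. s_m = a if ν₂(m+1) is even and s_m = b if ν₂(m+1) is odd. Then (z³ + z)·F² + ((a+b)z² + (a+b))·F + ((a² + ab + b²)z + a² + ab) = 0 in K[[z]]; in particular F is algebraic of degree 2 over K(z). -/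
/-!
In characteristic 2 squaring is the Frobenius, so `F(z)² = Σ s_m² z^{2m}`, and `s_m² = (a+b) s_m + ab`
because `s_m ∈ {a, b}`. Together with `s_{2k} = a` and `s_{2k+1} = a + b + s_k` this expresses both
`F²` and `F` through `F(z²)` and `1/(1+z²)`; eliminating `F(z²)` gives the quadratic equation.

`F` is not rational: if `q F` were a polynomial, compare its coefficients at `2^k - 1 + deg q` and
`2^(k+1) - 1 + deg q` for large `k`. The two windows of the sequence that enter agree except at the
index multiplying the leading coefficient of `q`, where they read `s_{2^k - 1} = ε_k` and
`s_{2^(k+1) - 1} = ε_{k+1} ≠ ε_k`.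
-/

/-- The field `F₂(a,b)` of rational functions in two indeterminates over `F₂`. -/
abbrev F2ab : Type := FractionRing (MvPolynomial (Fin 2) (ZMod 2))

open scoped RatFunc

open PowerSeries
open scoped Polynomial

theorem padicValNat_pow_add {p k r : ℕ} [hp : Fact p.Prime] (hr : r ≠ 0) (hrk : r < p ^ k) :
    padicValNat p (p ^ k + r) = padicValNat p r := by
  have hlt : padicValNat p r < k :=
    (Nat.pow_lt_pow_iff_right hp.out.one_lt).mp
      ((Nat.le_of_dvd (Nat.pos_of_ne_zero hr) pow_padicValNat_dvd).trans_lt hrk)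
  have h := padicValRat.add_eq_of_lt (p := p) (q := r) (r := (p : ℚ) ^ k) (by positivity)
    (by exact_mod_cast hr) (by simp [hp.out.ne_zero])
    (by simpa [padicValRat.pow, hp.out.ne_zero, padicValRat.self hp.out.one_lt] using hlt)
  rw [add_comm] at h
  exact_mod_cast h

namespace PowerSeries

theorem eq_expand_two_add_X_mul_expand_two {R : Type*} [CommRing R] (f : R⟦X⟧) :
    f = expand 2 two_ne_zero (mk fun k => coeff (2 * k) f) +
      X * expand 2 two_ne_zero (mk fun k => coeff (2 * k + 1) f) := by
  ext n
  rcases n with _ | n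
  · simp
  · simp only [map_add, coeff_succ_X_mul, coeff_expand, coeff_mk]
    obtain ⟨k, rfl | rfl⟩ := Nat.even_or_odd' n
    · simp [Nat.dvd_add_right]
    · simp [Nat.dvd_add_right, Nat.mul_div_cancel' (by omega : 2 ∣ 2 * k + 1 + 1)]

theorem map_frobenius_expand_two {R : Type*} [CommRing R] [CharP R 2] (f : R⟦X⟧) :
    (expand 2 two_ne_zero f).map (frobenius R 2) = f ^ 2 :=
  MvPowerSeries.map_frobenius_expand (p := 2) two_ne_zero

theorem coeff_coe_mul_of_natDegree_le {R : Type*} [CommRing R] (q : R[X]) (f : R⟦X⟧) {n : ℕ}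
    (hn : q.natDegree ≤ n) :
    coeff n ((q : R⟦X⟧) * f) =
      ∑ i ∈ Finset.range (q.natDegree + 1), q.coeff i * coeff (n - i) f := by
  rw [coeff_mul, Finset.Nat.sum_antidiagonal_eq_sum_range_succ_mk]
  simp only [Polynomial.coeff_coe]
  refine (Finset.sum_subset (Finset.range_subset_range.mpr (by omega)) fun i _ hi => ?_).symm
  rw [Polynomial.coeff_eq_zero_of_natDegree_lt (by simpa using hi), zero_mul]

theorem aeval_coe_map_algebraMap {K : Type*} [Field K] (f : K⟦X⟧) (P : K[X][X]) :
    Polynomial.aeval (f : LaurentSeries K) (P.map (algebraMap K[X] (RatFunc K))) =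
      (Polynomial.aeval f P : LaurentSeries K) := by
  rw [Polynomial.aeval_map_algebraMap (RatFunc K), Polynomial.aeval_def, Polynomial.aeval_def,
    Polynomial.hom_eval₂]
  rfl

end PowerSeries

theorem RatFunc.denom_mul_eq_num_of_coe_eq {K : Type*} [Field K] {r : RatFunc K} {f : K⟦X⟧}
    (h : (r : LaurentSeries K) = f) : (r.denom : K⟦X⟧) * f = r.num := by
  apply HahnSeries.ofPowerSeries_injective (Γ := ℤ)
  have hr : r * algebraMap K[X] (RatFunc K) r.denom = algebraMap K[X] (RatFunc K) r.num := by
    nth_rewrite 1 [← RatFunc.num_div_denom r]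
    exact div_mul_cancel₀ _ (RatFunc.algebraMap_ne_zero (RatFunc.denom_ne_zero r))
  have := congrArg (fun x : RatFunc K => (x : LaurentSeries K)) hr
  simp only [map_mul, h, ← IsScalarTower.algebraMap_apply,
    Polynomial.algebraMap_hahnSeries_apply] at this
  rwa [map_mul, mul_comm]

theorem Polynomial.two_le_natDegree_of_aeval_eq_zero {L A : Type*} [Field L] [Ring A]
    [Nontrivial A] [Algebra L A] {x : A} (hx : x ∉ (algebraMap L A).range) {Q : L[X]}
    (hQ : Q ≠ 0) (hQx : aeval x Q = 0) : 2 ≤ Q.natDegree :=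
  ((minpoly.two_le_natDegree_iff (IsAlgebraic.isIntegral ⟨Q, hQ, hQx⟩)).mpr hx).trans
    (natDegree_le_natDegree (minpoly.degree_le_of_ne_zero L x hQ hQx))

section PeriodDoubling

variable {α : Type*} (a b : α)

def periodDoubling (m : ℕ) : α :=
  if Even (padicValNat 2 (m + 1)) then a else b

theorem periodDoubling_two_mul (k : ℕ) : periodDoubling a b (2 * k) = a := by
  simp [periodDoubling, padicValNat.eq_zero_of_not_dvd (by omega : ¬ 2 ∣ 2 * k + 1)]

theorem periodDoubling_two_pow_sub_one (k : ℕ) :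
    periodDoubling a b (2 ^ k - 1) = if Even k then a else b := by
  simp [periodDoubling, Nat.sub_add_cancel Nat.one_le_two_pow]

theorem periodDoubling_two_pow_add {k m : ℕ} (hm : m + 1 < 2 ^ k) :
    periodDoubling a b (2 ^ k + m) = periodDoubling a b m := by
  simp only [periodDoubling, add_assoc, padicValNat_pow_add m.succ_ne_zero hm]

end PeriodDoubling

section CommRing

variable {R : Type*} [CommRing R] (a b : R)

theorem periodDoubling_two_mul_add_one (k : ℕ) :
    periodDoubling a b (2 * k + 1) = a + b - periodDoubling a b k := by
  have hv : padicValNat 2 (2 * k + 1 + 1) = padicValNat 2 (k + 1) + 1 := by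
    rw [show 2 * k + 1 + 1 = 2 * (k + 1) by ring, padicValNat.mul two_ne_zero k.succ_ne_zero,
      padicValNat.self one_lt_two, add_comm]
  by_cases he : Even (padicValNat 2 (k + 1)) <;> simp [periodDoubling, hv, Nat.even_add_one, he]

theorem periodDoubling_sq (m : ℕ) :
    periodDoubling a b m ^ 2 = (a + b) * periodDoubling a b m - a * b := by
  unfold periodDoubling
  split_ifs <;> ring

theorem coeff_coe_mul_mk_periodDoubling (q : R[X]) {k : ℕ} (hk : q.natDegree < 2 ^ k) :
    coeff (2 ^ k - 1 + q.natDegree) ((q : R⟦X⟧) * mk (periodDoubling a b)) =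
      ∑ i ∈ Finset.range q.natDegree, q.coeff i * periodDoubling a b (q.natDegree - 1 - i) +
        q.leadingCoeff * periodDoubling a b (2 ^ k - 1) := by
  rw [coeff_coe_mul_of_natDegree_le _ _ (by omega), Finset.sum_range_succ, Nat.add_sub_cancel,
    coeff_mk, Polynomial.leadingCoeff]
  congr 1
  refine Finset.sum_congr rfl fun i hi => ?_
  have hi := Finset.mem_range.mp hi
  rw [coeff_mk, ← periodDoubling_two_pow_add a b (k := k) (m := q.natDegree - 1 - i) (by omega)]
  congr 2
  have := Nat.one_le_two_pow (n := k)
  omega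

noncomputable def periodDoublingQuadratic : R[X][X] :=
  .C (.X ^ 3 + .X) * .X ^ 2 + .C (.C (a + b) * .X ^ 2 + .C (a + b)) * .X +
    .C (.C (a ^ 2 + a * b + b ^ 2) * .X + .C (a ^ 2 + a * b))

theorem natDegree_periodDoublingQuadratic [Nontrivial R] :
    (periodDoublingQuadratic a b).natDegree = 2 :=
  Polynomial.natDegree_quadratic (Polynomial.monic_X_pow_add (by compute_degree!)).ne_zero

theorem aeval_periodDoublingQuadratic (f : R⟦X⟧) :
    Polynomial.aeval f (periodDoublingQuadratic a b) =
      (X ^ 3 + X) * f ^ 2 + (C (a + b) * X ^ 2 + C (a + b)) * f +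
        (C (a ^ 2 + a * b + b ^ 2) * X + C (a ^ 2 + a * b)) := by
  simp [periodDoublingQuadratic, PowerSeries.algebraMap_apply']

theorem periodDoubling_functional_equation [CharP R 2] :
    (X ^ 3 + X) * mk (periodDoubling a b) ^ 2 +
        (C (a + b) * X ^ 2 + C (a + b)) * mk (periodDoubling a b) +
        (C (a ^ 2 + a * b + b ^ 2) * X + C (a ^ 2 + a * b)) = 0 := by
  set F := mk (periodDoubling a b)
  set E : R⟦X⟧ := expand 2 two_ne_zero (mk 1)
  have hsq : F ^ 2 = C (a + b) * expand 2 two_ne_zero F - C (a * b) * E := by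
    have : F.map (frobenius R 2) = C (a + b) * F - C (a * b) * mk 1 := by
      ext n
      simp [F, frobenius_def, periodDoubling_sq, add_mul, mul_assoc]
    rw [← map_frobenius_expand_two, map_expand, this, map_sub, map_mul, map_mul, expand_C,
      expand_C]
  have hsplit : F = C a * E + X * (C (a + b) * E - expand 2 two_ne_zero F) := by
    have heven : (mk fun k => coeff (2 * k) F) = C a * mk 1 := by
      ext k
      simp [F, periodDoubling_two_mul]
    have hodd : (mk fun k => coeff (2 * k + 1) F) = C (a + b) * mk 1 - F := by
      ext k
      simp [F, periodDoubling_two_mul_add_one, add_mul]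
    conv_lhs => rw [eq_expand_two_add_X_mul_expand_two F, heven, hodd]
    simp only [map_mul, map_sub, expand_C, E]
  have hE : E * (1 - X ^ 2) = 1 := by
    simpa using congrArg (expand 2 two_ne_zero) (mk_one_mul_one_sub_eq_one R)
  have htwo : (2 : R⟦X⟧) = 0 := by
    rw [← map_ofNat C 2, CharTwo.two_eq_zero, map_zero]
  simp only [map_add, map_mul, map_pow] at hsq hsplit ⊢
  -- with `c` the constant coefficient of the quadratic, eliminating `F(z²)` leaves
  -- `c ((1 + z²) E + 1) = 2 c E - c (E (1 - z²) - 1)`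
  linear_combination (X ^ 3 + X) * hsq + ((C a + C b) * (X ^ 2 + 1)) * hsplit
    - (C a ^ 2 + C a * C b + (C a ^ 2 + C a * C b + C b ^ 2) * X) * hE
    + (C a ^ 2 + C a * C b + (C a ^ 2 + C a * C b + C b ^ 2) * X) * E * htwo

variable [IsDomain R] {a b}

theorem coe_mul_mk_periodDoubling_ne (hab : a ≠ b) {q : R[X]} (hq : q ≠ 0) (p : R[X]) :
    (q : R⟦X⟧) * mk (periodDoubling a b) ≠ p := by
  intro h
  set k := q.natDegree + p.natDegree + 1
  have hcoeff : ∀ j, k ≤ j →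
      ∑ i ∈ Finset.range q.natDegree, q.coeff i * periodDoubling a b (q.natDegree - 1 - i) +
        q.leadingCoeff * periodDoubling a b (2 ^ j - 1) = 0 := by
    intro j hj
    have hj' : k < 2 ^ j := Nat.lt_two_pow_self.trans_le' hj
    rw [← coeff_coe_mul_mk_periodDoubling a b q (by omega), h, Polynomial.coeff_coe,
      Polynomial.coeff_eq_zero_of_natDegree_lt (by omega)]
  have hlc : q.leadingCoeff *
      (periodDoubling a b (2 ^ k - 1) - periodDoubling a b (2 ^ (k + 1) - 1)) = 0 := by
    linear_combination hcoeff k le_rfl - hcoeff (k + 1) k.le_succ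
  rcases mul_eq_zero.mp hlc with h0 | h0
  · exact hq (Polynomial.leadingCoeff_eq_zero.mp h0)
  · rw [periodDoubling_two_pow_sub_one, periodDoubling_two_pow_sub_one, sub_eq_zero] at h0
    by_cases hk : Even k <;> simp [hk, Nat.even_add_one] at h0
    exacts [hab h0, hab h0.symm]

end CommRing

theorem mk_periodDoubling_notMem_range {K : Type*} [Field K] {a b : K} (hab : a ≠ b) :
    ((mk (periodDoubling a b) : K⟦X⟧) : LaurentSeries K) ∉
      (algebraMap (RatFunc K) (LaurentSeries K)).range := by
  rintro ⟨r, hr⟩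
  exact coe_mul_mk_periodDoubling_ne hab (RatFunc.denom_ne_zero r) r.num
    (RatFunc.denom_mul_eq_num_of_coe_eq hr)

/-- Over `K = F₂(a,b)`, the power series of the period-doubling
sequence, `F = Σ s_m z^m` with `s_m = a` if `ν₂(m+1)` is even and `s_m = b`
otherwise, satisfies
`(z³+z)F² + ((a+b)z² + (a+b))F + ((a²+ab+b²)z + a²+ab) = 0`;
in particular `F` is algebraic of degree 2 over `K(z)`. -/
theorem stmt18 (a b : F2ab)
    (ha : a = algebraMap (MvPolynomial (Fin 2) (ZMod 2)) F2ab (MvPolynomial.X 0))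
    (hb : b = algebraMap (MvPolynomial (Fin 2) (ZMod 2)) F2ab (MvPolynomial.X 1))
    (F : PowerSeries F2ab)
    (hF : F = PowerSeries.mk fun m =>
      if Even (padicValNat 2 (m + 1)) then a else b) :
    ((PowerSeries.X ^ 3 + PowerSeries.X) * F ^ 2 +
        (PowerSeries.C (R := F2ab) (a + b) * PowerSeries.X ^ 2 + PowerSeries.C (R := F2ab) (a + b)) * F +
        (PowerSeries.C (R := F2ab) (a ^ 2 + a * b + b ^ 2) * PowerSeries.X +
          PowerSeries.C (R := F2ab) (a ^ 2 + a * b)) = 0) ∧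
      ∃ P : Polynomial (RatFunc F2ab), P ≠ 0 ∧ P.natDegree = 2 ∧
        Polynomial.aeval (F : LaurentSeries F2ab) P = 0 ∧
        ∀ Q : Polynomial (RatFunc F2ab), Q ≠ 0 →
          Polynomial.aeval (F : LaurentSeries F2ab) Q = 0 → 2 ≤ Q.natDegree := by
  have hab : a ≠ b := by
    rw [ha, hb, Ne, (IsFractionRing.injective _ F2ab).eq_iff, MvPolynomial.X_inj]
    decide
  have hF' : F = mk (periodDoubling a b) := hF
  subst hF'
  have hfun := periodDoubling_functional_equation a b
  set P := (periodDoublingQuadratic a b).map (algebraMap F2ab[X] (RatFunc F2ab))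
  have hdeg : P.natDegree = 2 := by
    rw [Polynomial.natDegree_map_eq_of_injective (IsFractionRing.injective _ _),
      natDegree_periodDoublingQuadratic]
  refine ⟨hfun, P, Polynomial.ne_zero_of_natDegree_gt (n := 0) (by omega), hdeg, ?_,
    fun Q hQ hQF => Polynomial.two_le_natDegree_of_aeval_eq_zero
      (mk_periodDoubling_notMem_range hab) hQ hQF⟩
  rw [aeval_coe_map_algebraMap, aeval_periodDoublingQuadratic, hfun, map_zero]
end

section
/- Let F₀ ∈ F₂[[z]] be the power series whose coefficient at z^m is 1 if and only if ν₂(m+1) ≡ 0 (mod 4), and set H := F₀ + z·F₀². Then (1 + z)·(H + z³·H⁴) = 1 in F₂[[z]]; in particular the power series attached to the sequence s((aabb)^∞) is algebraic of degree 4, and not 8, over the relevant rational function field. -/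
/-- The field `F₂(a,b)` of rational functions in two indeterminates over `F₂`. -/
abbrev F2ab' : Type := FractionRing (MvPolynomial (Fin 2) (ZMod 2))

open scoped RatFunc

/-!
Write `A j = ∑_{ν₂(m+1) ≡ j (mod 4)} z^m`, so that `F₀ = A 0`. Since
`ν₂(2k+2) = ν₂(k+1) + 1` and `f(z)² = f(z²)` over `F₂`, we get `z · A j ² = A (j+1)` for `j < 3`.
Hence `H = A 0 + A 1`, `z³ H⁴ = A 2 + A 3`, and `H + z³ H⁴ = ∑ A j = 1/(1+z)`.

Over `K = F₂(a,b)(z)`, the relation says that `w = 1/H` is a root of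
`Y⁴ - (1+z) Y³ - (1+z) z³`, which is Eisenstein at the prime `1+z` of `F₂(a,b)[z]`, hence
irreducible. Finally `F = (a-b) H + b/(1-z) = (a-b)/w + b/(1-z)` generates the same field
over `K` as `w`, so it has degree 4.
-/

lemma padicValNat_two_mul_add_two (k : ℕ) :
    padicValNat 2 (2 * k + 2) = padicValNat 2 (k + 1) + 1 := by
  rw [show 2 * k + 2 = 2 * (k + 1) by ring, padicValNat.mul two_ne_zero k.succ_ne_zero,
    padicValNat.self one_lt_two, add_comm]

section PowerSeries

open PowerSeries

instance PowerSeries.instCharP {R : Type*} [Semiring R] (p : ℕ) [CharP R p] : CharP R⟦X⟧ p :=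
  charP_of_injective_ringHom C_injective p

theorem PowerSeries.expand_zmod_eq_pow (p : ℕ) [Fact p.Prime] (f : (ZMod p)⟦X⟧) :
    expand p (Fact.out : p.Prime).ne_zero f = f ^ p := by
  have := MvPowerSeries.map_frobenius_expand p (Fact.out : p.Prime).ne_zero (f := f)
  rwa [ZMod.frobenius_zmod, MvPowerSeries.map_id] at this

lemma one_add_X_mul_mk_one : (1 + X : (ZMod 2)⟦X⟧) * mk 1 = 1 := by
  rw [← CharTwo.sub_eq_add, mul_comm]
  exact mk_one_mul_one_sub_eq_one _

theorem PowerSeries.mk_ite_eq {R : Type*} [CommRing R] (p : ℕ → Prop) [DecidablePred p]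
    (a b : R) :
    (mk fun m => if p m then a else b) =
      C (a - b) * (mk fun m => if p m then 1 else 0) + C b * mk 1 := by
  ext n
  simp only [map_add, coeff_C_mul, coeff_mk, Pi.one_apply]
  split_ifs <;> ring

end PowerSeries

section ValuationClasses

open PowerSeries

noncomputable def valuationClassSeries (j : ℕ) : (ZMod 2)⟦X⟧ :=
  mk fun m => if padicValNat 2 (m + 1) % 4 = j then 1 else 0

local notation "A" => valuationClassSeries

lemma X_mul_valuationClassSeries_sq {j : ℕ} (hj : j < 3) : X * A j ^ 2 = A (j + 1) := by
  ext n
  rcases n with _ | n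
  · simp [valuationClassSeries]
  rw [coeff_succ_X_mul, ← expand_zmod_eq_pow, coeff_expand]
  simp only [valuationClassSeries, coeff_mk]
  obtain ⟨k, rfl | rfl⟩ := Nat.even_or_odd' n
  · rw [if_pos (dvd_mul_right 2 k), Nat.mul_div_cancel_left k two_pos,
      padicValNat_two_mul_add_two]
    congr 1
    exact propext (by omega)
  · rw [if_neg (by omega), padicValNat.eq_zero_of_not_dvd (by omega), if_neg (by omega)]

lemma sum_valuationClassSeries : ∑ j ∈ Finset.range 4, A j = mk 1 := by
  ext n
  simp [valuationClassSeries, map_sum, Nat.mod_lt]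

lemma valuationClassSeries_zero_add_one :
    A 0 + A 1 = mk fun m => if padicValNat 2 (m + 1) % 4 < 2 then 1 else 0 := by
  ext n
  simp only [valuationClassSeries, map_add, coeff_mk]
  split_ifs <;> first | omega | decide

lemma valuationClassSeries_zero_add_one_add_X_pow_three_mul :
    A 0 + A 1 + X ^ 3 * (A 0 + A 1) ^ 4 = mk 1 := by
  have h₁ : X * A 0 ^ 2 = A 1 := X_mul_valuationClassSeries_sq (by norm_num)
  have h₂ : X * A 1 ^ 2 = A 2 := X_mul_valuationClassSeries_sq (by norm_num)
  have h₃ : X * A 2 ^ 2 = A 3 := X_mul_valuationClassSeries_sq (by norm_num)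
  have hfrob : (A 0 + A 1) ^ 4 = A 0 ^ 4 + A 1 ^ 4 := add_pow_char_pow (p := 2) (n := 2) _ _
  rw [← sum_valuationClassSeries, hfrob]
  simp only [Finset.sum_range_succ, Finset.sum_range_zero, zero_add]
  linear_combination (X * (X * A 0 ^ 2 + A 1)) * h₁ + h₂ + X * (X * A 1 ^ 2 + A 2) * h₂ + h₃

end ValuationClasses

section Quartic

open Polynomial

variable (k : Type*) [Field k]

noncomputable def eisensteinQuartic : k[X][X] := X ^ 4 - C (1 + X) * X ^ 3 - C ((1 + X) * X ^ 3)

variable {k}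

lemma natDegree_eisensteinQuartic : (eisensteinQuartic k).natDegree = 4 := by
  unfold eisensteinQuartic; compute_degree!

lemma monic_eisensteinQuartic : (eisensteinQuartic k).Monic := by
  unfold eisensteinQuartic; monicity!

lemma prime_one_add_X : Prime (1 + X : k[X]) := by
  simpa [sub_eq_add_neg, add_comm] using prime_X_sub_C (-1 : k)

lemma coeff_eisensteinQuartic (n : ℕ) :
    (eisensteinQuartic k).coeff n =
      (if n = 4 then 1 else 0) -
        (1 + X) * ((if n = 3 then 1 else 0) + if n = 0 then X ^ 3 else 0) := by
  simp only [eisensteinQuartic, coeff_sub, coeff_X_pow, coeff_C_mul, coeff_C]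
  split_ifs <;> simp_all

lemma isEisensteinAt_eisensteinQuartic :
    (eisensteinQuartic k).IsEisensteinAt (Ideal.span {1 + X}) := by
  refine ⟨?_, fun {n} hn => ?_, ?_⟩
  · rw [monic_eisensteinQuartic.leadingCoeff, Ideal.mem_span_singleton]
    exact prime_one_add_X.not_dvd_one
  · rw [natDegree_eisensteinQuartic] at hn
    rw [Ideal.mem_span_singleton, coeff_eisensteinQuartic, if_neg hn.ne, zero_sub, dvd_neg]
    exact dvd_mul_right _ _
  · rw [Ideal.span_singleton_pow, Ideal.mem_span_singleton, coeff_eisensteinQuartic]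
    simp only [OfNat.zero_ne_ofNat, if_false, if_true, zero_add, zero_sub, dvd_neg, sq]
    rw [mul_dvd_mul_iff_left prime_one_add_X.ne_zero]
    intro h
    simpa using eval_dvd (x := -1) (prime_one_add_X.dvd_of_dvd_pow h)

lemma irreducible_map_eisensteinQuartic :
    Irreducible ((eisensteinQuartic k).map (algebraMap k[X] (RatFunc k))) :=
  (monic_eisensteinQuartic.irreducible_iff_irreducible_map_fraction_map).mp <|
    isEisensteinAt_eisensteinQuartic.irreducible
      ((Ideal.span_singleton_prime prime_one_add_X.ne_zero).mpr prime_one_add_X)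
      monic_eisensteinQuartic.isPrimitive (by rw [natDegree_eisensteinQuartic]; norm_num)

lemma minpoly_inv_eq_eisensteinQuartic {L : Type*} [Field L] [Algebra (RatFunc k) L] {h : L}
    (hh : (1 + algebraMap (RatFunc k) L RatFunc.X) *
      (h + algebraMap (RatFunc k) L RatFunc.X ^ 3 * h ^ 4) = 1) :
    minpoly (RatFunc k) h⁻¹ = (eisensteinQuartic k).map (algebraMap k[X] (RatFunc k)) := by
  have h0 : h ≠ 0 := by rintro rfl; simp at hh
  refine (minpoly.eq_of_irreducible_of_monic irreducible_map_eisensteinQuartic ?_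
    (monic_eisensteinQuartic.map _)).symm
  rw [aeval_def, eval₂_map, eisensteinQuartic]
  simp only [eval₂_sub, eval₂_mul, eval₂_C, RingHom.comp_apply, map_add, map_mul,
    map_pow, map_one, RatFunc.algebraMap_X, eval₂_add, eval₂_one, eval₂_pow, eval₂_X]
  field_simp
  linear_combination -hh

end Quartic

section Adjoin

open IntermediateField

variable {K L : Type*} [Field K] [Field L] [Algebra K L]

lemma IntermediateField.adjoin_simple_algebraMap_mul_inv_add {c : K} (hc : c ≠ 0) (d : K)
    (x : L) : K⟮algebraMap K L c * x⁻¹ + algebraMap K L d⟯ = K⟮x⟯ := by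
  set y := algebraMap K L c * x⁻¹ + algebraMap K L d
  have hx : x = (algebraMap K L c⁻¹ * (y - algebraMap K L d))⁻¹ := by
    rw [add_sub_cancel_right, ← mul_assoc, ← map_mul, inv_mul_cancel₀ hc, map_one, one_mul,
      inv_inv]
  refine le_antisymm (adjoin_simple_le_iff.mpr ?_) (adjoin_simple_le_iff.mpr ?_)
  · exact add_mem (mul_mem (algebraMap_mem _ _) (inv_mem (mem_adjoin_simple_self K x)))
      (algebraMap_mem _ _)
  · rw [hx]
    exact inv_mem (mul_mem (algebraMap_mem _ _)
      (sub_mem (mem_adjoin_simple_self K y) (algebraMap_mem _ _)))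

lemma IntermediateField.isIntegral_of_adjoin_simple_eq {x y : L} (hy : IsIntegral K y)
    (h : K⟮x⟯ = K⟮y⟯) : IsIntegral K x := by
  have : FiniteDimensional K K⟮y⟯ := adjoin.finiteDimensional hy
  have hx : x ∈ K⟮y⟯ := h ▸ mem_adjoin_simple_self K x
  exact (IsIntegral.of_finite K (⟨x, hx⟩ : K⟮y⟯)).map K⟮y⟯.val

lemma IntermediateField.natDegree_minpoly_eq_of_adjoin_simple_eq {x y : L} (hy : IsIntegral K y)
    (h : K⟮x⟯ = K⟮y⟯) : (minpoly K x).natDegree = (minpoly K y).natDegree := by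
  rw [← adjoin.finrank hy, ← adjoin.finrank (isIntegral_of_adjoin_simple_eq hy h), h]

end Adjoin

section LaurentSeries

open PowerSeries
open scoped LaurentSeries

variable {k : Type*} [Field k]

lemma RatFunc.algebraMap_C_eq (r : k) :
    algebraMap (RatFunc k) k⸨X⸩ (RatFunc.C r) = HahnSeries.C r := by
  rw [← RatFunc.algebraMap_C, ← IsScalarTower.algebraMap_apply]
  simp

lemma PowerSeries.coe_mk_one :
    ((mk 1 : k⟦X⟧) : k⸨X⸩) = algebraMap (RatFunc k) k⸨X⸩ (1 - RatFunc.X)⁻¹ := by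
  rw [map_inv₀]
  refine eq_inv_of_mul_eq_one_left ?_
  simpa using congrArg (fun f : k⟦X⟧ => (f : k⸨X⸩)) (mk_one_mul_one_sub_eq_one k)

lemma natDegree_minpoly_C_mul_add_C_mul_mk_one {G : k⟦X⟧}
    (hG : (1 + X) * (G + X ^ 3 * G ^ 4) = 1) {c : k} (hc : c ≠ 0) (d : k) :
    (minpoly (RatFunc k) ((C c * G + C d * mk 1 : k⟦X⟧) : k⸨X⸩)).natDegree = 4 := by
  set g : k⸨X⸩ := ↑G
  have hg : (1 + algebraMap (RatFunc k) _ RatFunc.X) *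
      (g + algebraMap (RatFunc k) _ RatFunc.X ^ 3 * g ^ 4) = 1 := by
    rw [RatFunc.coe_X]
    simpa using congrArg (fun f : k⟦X⟧ => (f : k⸨X⸩)) hG
  have hgc : ((C c * G + C d * mk 1 : k⟦X⟧) : k⸨X⸩) =
      algebraMap (RatFunc k) _ (RatFunc.C c) * g⁻¹⁻¹ +
        algebraMap (RatFunc k) _ (RatFunc.C d * (1 - RatFunc.X)⁻¹) := by
    rw [inv_inv, map_mul, RatFunc.algebraMap_C_eq, RatFunc.algebraMap_C_eq, ← coe_mk_one]
    simp [g]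
  have hmin := minpoly_inv_eq_eisensteinQuartic hg
  have hint : IsIntegral (RatFunc k) g⁻¹ := minpoly.ne_zero_iff.mp <| by
    rw [hmin]
    exact (monic_eisensteinQuartic.map _).ne_zero
  rw [hgc, IntermediateField.natDegree_minpoly_eq_of_adjoin_simple_eq hint
    (IntermediateField.adjoin_simple_algebraMap_mul_inv_add ((map_ne_zero _).mpr hc) _ _),
    hmin, monic_eisensteinQuartic.natDegree_map, natDegree_eisensteinQuartic]

end LaurentSeries

/-- Let `F₀ ∈ F₂[[z]]` be supported on `{m : ν₂(m+1) ≡ 0 (mod 4)}`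
and `H = F₀ + z F₀²`.  Then `(1+z)(H + z³H⁴) = 1`; in particular the power
series `F = Σ s_m z^m` attached to the sequence `s((aabb)^∞)` (so `s_m = a` if
`ν₂(m+1) mod 4 ∈ {0,1}` and `s_m = b` otherwise), with `a, b` the two
indeterminates of `F₂(a,b)`, is algebraic of degree 4 — and not 8 — over
`F₂(a,b)(z)`. -/
theorem stmt19 (F₀ H : PowerSeries (ZMod 2))
    (hF₀ : F₀ = PowerSeries.mk fun m =>
      if padicValNat 2 (m + 1) % 4 = 0 then 1 else 0)
    (hH : H = F₀ + PowerSeries.X * F₀ ^ 2) :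
    (1 + PowerSeries.X) * (H + PowerSeries.X ^ 3 * H ^ 4) = 1 ∧
      ∀ a b : F2ab',
        a = algebraMap (MvPolynomial (Fin 2) (ZMod 2)) F2ab' (MvPolynomial.X 0) →
        b = algebraMap (MvPolynomial (Fin 2) (ZMod 2)) F2ab' (MvPolynomial.X 1) →
        ∀ F : PowerSeries F2ab',
          F = (PowerSeries.mk fun m =>
            if padicValNat 2 (m + 1) % 4 < 2 then a else b) →
          ∃ P : Polynomial (RatFunc F2ab'), P ≠ 0 ∧ P.natDegree = 4 ∧
            Polynomial.aeval (F : LaurentSeries F2ab') P = 0 ∧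
            ∀ Q : Polynomial (RatFunc F2ab'), Q ≠ 0 →
              Polynomial.aeval (F : LaurentSeries F2ab') Q = 0 → 4 ≤ Q.natDegree := by
  open PowerSeries in
  have hHA : H = valuationClassSeries 0 + valuationClassSeries 1 := by
    rw [hH, hF₀, ← X_mul_valuationClassSeries_sq (by norm_num)]
    rfl
  have hrel : (1 + X) * (H + X ^ 3 * H ^ 4) = 1 := by
    rw [hHA, valuationClassSeries_zero_add_one_add_X_pow_three_mul, one_add_X_mul_mk_one]
  refine ⟨hrel, fun a b ha hb F hF => ?_⟩
  set φ := algebraMap (ZMod 2) F2ab'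
  have hFH : F = C (a - b) * H.map φ + C b * mk 1 := by
    rw [hF, mk_ite_eq, hHA, valuationClassSeries_zero_add_one]
    congr
    ext n
    rw [coeff_map, coeff_mk, coeff_mk]
    split_ifs <;> simp
  have hab : a - b ≠ 0 := by
    rw [sub_ne_zero, ha, hb]
    exact (IsFractionRing.injective _ _).ne (MvPolynomial.X_injective.ne (by decide))
  have hdeg := natDegree_minpoly_C_mul_add_C_mul_mk_one (by simpa using congrArg (map φ) hrel) hab b
  rw [← hFH] at hdeg
  refine ⟨minpoly _ (F : LaurentSeries F2ab'), fun h0 => by simp [h0] at hdeg, hdeg,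
    minpoly.aeval _ _, fun Q hQ hQ0 => ?_⟩
  exact hdeg ▸ Polynomial.natDegree_le_natDegree (minpoly.degree_le_of_ne_zero _ _ hQ hQ0)
end
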